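/- arXiv:1411.7114 — 11 statements merged into one kernel-verified Lean document; each statement's English description precedes it below -/
import Mathlib

section
/- Let Q = (q_ij) be the transition rate matrix of an irreducible continuous-time Markov chain on N states (q_ij ≥ 0 for i ≠ j, q_ii = −Σ_{j≠i} q_ij) with stationary distribution μ (μQ = 0, all μ_i > 0). Then there exists a constant c_1 > 0 depending only on Q such that for every probability distribution p with all p_i > 0, the non-adiabatic entropy production rate e_p^{(na)} = (1/2)·Σ_{i,j} (p_i q_ij − p_j q_ji)·log((p_i μ_j)/(p_j μ_i)) satisfies e_p^{(na)} ≥ c_1·Σ_i [Σ_{j≠i} (p_j q_ji − p_i q_ij)]². In particular one may take c_1 = r/(2MN) where r = min_i μ_i and M = max_{i≠j} q_ij. -/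
/-!
Write `a = p i * μ j`, `b = p j * μ i`. Antisymmetrizing, and adding the sums that vanish by the
row-sum condition and by stationarity, turns the entropy production into
`∑ i j, q i j / μ j * (a * log (a / b) - a + b)`, a sum of Bregman divergences of `x log x`.
Since `a, b ≤ 1`, `a * log (a / b) - a + b ≥ (√a - √b) ^ 2 ≥ (a - b) ^ 2 / 4`, so the entropy
production dominates `D / 4` with `D = ∑ i j, q i j * (p i * μ j - p j * μ i) ^ 2`. Conversely,
stationarity rewrites the net current into state `i` as
`(∑ j ≠ i, q j i * (p j * μ i - p i * μ j)) / μ i`, and Cauchy–Schwarz with the weights `q j i`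
bounds the sum of its squares by a multiple of `D`.
-/

open Finset Real

lemma sq_sub_le_sq_mul_log_sq_div_sq {x y : ℝ} (hx : 0 < x) (hy : 0 < y) :
    (x - y) ^ 2 ≤ x ^ 2 * log (x ^ 2 / y ^ 2) - x ^ 2 + y ^ 2 := by
  have hlog : 1 - y / x ≤ log (x / y) := by
    simpa using one_sub_inv_le_log_of_pos (div_pos hx hy)
  have hx2 : x ^ 2 * (1 - y / x) = x ^ 2 - x * y := by field_simp
  rw [← div_pow, log_pow]
  nlinarith [mul_le_mul_of_nonneg_left hlog (sq_nonneg x)]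

lemma sq_sub_div_four_le_mul_log_div_sub_add {a b : ℝ} (ha : 0 < a) (hb : 0 < b)
    (ha₁ : a ≤ 1) (hb₁ : b ≤ 1) : (a - b) ^ 2 / 4 ≤ a * log (a / b) - a + b := by
  obtain ⟨x, hx, rfl⟩ : ∃ x, 0 < x ∧ x ^ 2 = a := ⟨√a, sqrt_pos.2 ha, sq_sqrt ha.le⟩
  obtain ⟨y, hy, rfl⟩ : ∃ y, 0 < y ∧ y ^ 2 = b := ⟨√b, sqrt_pos.2 hb, sq_sqrt hb.le⟩
  have hxy : (x + y) ^ 2 ≤ 4 := by nlinarith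
  have hfac : (x ^ 2 - y ^ 2) ^ 2 = (x - y) ^ 2 * (x + y) ^ 2 := by ring
  nlinarith [sq_sub_le_sq_mul_log_sq_div_sq hx hy,
    mul_le_mul_of_nonneg_left hxy (sq_nonneg (x - y))]

section

variable {ι : Type*} [Fintype ι] {q : ι → ι → ℝ} {μ p : ι → ℝ}

lemma le_one_of_sum_eq_one {f : ι → ℝ} (hf : ∀ i, 0 ≤ f i) (h : ∑ i, f i = 1) (i : ι) :
    f i ≤ 1 :=
  h ▸ single_le_sum (fun j _ => hf j) (mem_univ i)

lemma sum_sum_sub_mul_of_antisymm (f g : ι → ι → ℝ) (hg : ∀ i j, g j i = -g i j) :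
    ∑ i, ∑ j, (f i j - f j i) * g i j = 2 * ∑ i, ∑ j, f i j * g i j := by
  have hswap : ∑ i, ∑ j, f j i * g i j = -∑ i, ∑ j, f i j * g i j := by
    rw [sum_comm, ← sum_neg_distrib]
    refine sum_congr rfl fun i _ => ?_
    rw [← sum_neg_distrib]
    exact sum_congr rfl fun j _ => by rw [hg, mul_neg]
  simp only [sub_mul, sum_sub_distrib, hswap]
  ring

theorem nonadiabatic_ep_eq_sum_bregman (hqrow : ∀ i, ∑ j, q i j = 0)
    (hstat : ∀ j, ∑ i, μ i * q i j = 0) (hμ : ∀ i, μ i ≠ 0) :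
    (1 / 2) * ∑ i, ∑ j, (p i * q i j - p j * q j i) * log ((p i * μ j) / (p j * μ i)) =
      ∑ i, ∑ j, q i j / μ j *
        (p i * μ j * log ((p i * μ j) / (p j * μ i)) - p i * μ j + p j * μ i) := by
  have hrow : ∑ i, ∑ j, p i * q i j = 0 := by simp [← mul_sum, hqrow]
  have hcol : ∑ i, ∑ j, μ i * q i j * (p j / μ j) = 0 := by
    rw [sum_comm]; simp [← sum_mul, hstat]
  have hterm : ∀ i j, q i j / μ j *
      (p i * μ j * log ((p i * μ j) / (p j * μ i)) - p i * μ j + p j * μ i) =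
        p i * q i j * log ((p i * μ j) / (p j * μ i)) - p i * q i j
          + μ i * q i j * (p j / μ j) := fun i j => by
    field_simp [hμ j]
  rw [sum_sum_sub_mul_of_antisymm (fun i j => p i * q i j) _
    fun i j => by rw [← log_inv, inv_div]]
  simp only [hterm, sum_add_distrib, sum_sub_distrib, hrow, hcol]
  ring

theorem sum_sum_mul_sq_div_four_le_nonadiabatic_ep (hq : ∀ i j, i ≠ j → 0 ≤ q i j)
    (hqrow : ∀ i, ∑ j, q i j = 0) (hstat : ∀ j, ∑ i, μ i * q i j = 0) (hμ : ∀ i, 0 < μ i)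
    (hμ₁ : ∀ i, μ i ≤ 1) (hp : ∀ i, 0 < p i) (hp₁ : ∀ i, p i ≤ 1) :
    (∑ i, ∑ j, q i j * (p i * μ j - p j * μ i) ^ 2) / 4 ≤
      (1 / 2) * ∑ i, ∑ j, (p i * q i j - p j * q j i) * log ((p i * μ j) / (p j * μ i)) := by
  rw [nonadiabatic_ep_eq_sum_bregman hqrow hstat fun i => (hμ i).ne', sum_div]
  refine sum_le_sum fun i _ => ?_
  rw [sum_div]
  refine sum_le_sum fun j _ => ?_
  rcases eq_or_ne i j with rfl | hij
  · simp [div_self (mul_pos (hp i) (hμ i)).ne']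
  have hbound := sq_sub_div_four_le_mul_log_div_sub_add (mul_pos (hp i) (hμ j))
    (mul_pos (hp j) (hμ i)) (mul_le_one₀ (hp₁ i) (hμ j).le (hμ₁ j))
    (mul_le_one₀ (hp₁ j) (hμ i).le (hμ₁ i))
  calc q i j * (p i * μ j - p j * μ i) ^ 2 / 4
      = q i j * ((p i * μ j - p j * μ i) ^ 2 / 4) := by ring
    _ ≤ q i j / μ j * ((p i * μ j - p j * μ i) ^ 2 / 4) := by
      gcongr; exact le_div_self (hq i j hij) (hμ j) (hμ₁ j)
    _ ≤ _ := by gcongr; exact div_nonneg (hq i j hij) (hμ j).le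

theorem sum_erase_current_mul_eq [DecidableEq ι] (hqrow : ∀ i, ∑ j, q i j = 0)
    (hstat : ∀ j, ∑ i, μ i * q i j = 0) (i : ι) :
    (∑ j ∈ univ.erase i, (p j * q j i - p i * q i j)) * μ i =
      ∑ j ∈ univ.erase i, q j i * (p j * μ i - p i * μ j) := by
  have hout : ∑ j, p i * q i j * μ i = 0 := by simp [← sum_mul, ← mul_sum, hqrow]
  have hin : ∑ j, q j i * (p i * μ j) = 0 := by
    rw [← mul_zero (p i), ← hstat i, mul_sum]
    exact sum_congr rfl fun j _ => by ring
  rw [sum_erase _ (sub_self _), sum_erase _ (by ring), sum_mul]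
  simp only [sub_mul, mul_sub, sum_sub_distrib, hout, hin, sub_zero]
  exact sum_congr rfl fun j _ => by ring

theorem sq_sum_erase_current_le [DecidableEq ι] (hq : ∀ i j, i ≠ j → 0 ≤ q i j)
    (hqrow : ∀ i, ∑ j, q i j = 0) (hstat : ∀ j, ∑ i, μ i * q i j = 0) (hμ : ∀ i, 0 < μ i)
    (i : ι) :
    (∑ j ∈ univ.erase i, (p j * q j i - p i * q i j)) ^ 2 ≤
      (∑ j ∈ univ.erase i, q j i) / μ i ^ 2 *
        ∑ j ∈ univ.erase i, q j i * (p j * μ i - p i * μ j) ^ 2 := by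
  have hq' : ∀ j ∈ univ.erase i, 0 ≤ q j i := fun j hj => hq j i (ne_of_mem_erase hj)
  have hcs := sum_sq_le_sum_mul_sum_of_sq_le_mul (univ.erase i) hq'
    (fun j hj => mul_nonneg (hq' j hj) (sq_nonneg (p j * μ i - p i * μ j)))
    (r := fun j => q j i * (p j * μ i - p i * μ j)) fun j _ => le_of_eq (by ring)
  calc (∑ j ∈ univ.erase i, (p j * q j i - p i * q i j)) ^ 2
      = ((∑ j ∈ univ.erase i, (p j * q j i - p i * q i j)) * μ i) ^ 2 / μ i ^ 2 := by
        field_simp [(hμ i).ne']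
    _ ≤ _ := by
        rw [sum_erase_current_mul_eq hqrow hstat, div_mul_eq_mul_div]
        exact div_le_div_of_nonneg_right hcs (sq_nonneg _)

theorem sum_sq_current_le [DecidableEq ι] (hq : ∀ i j, i ≠ j → 0 ≤ q i j)
    (hqrow : ∀ i, ∑ j, q i j = 0) (hstat : ∀ j, ∑ i, μ i * q i j = 0) (hμ : ∀ i, 0 < μ i)
    {K : ℝ} (hK : ∀ i, (∑ j ∈ univ.erase i, q j i) / μ i ^ 2 ≤ K) :
    ∑ i, (∑ j ∈ univ.erase i, (p j * q j i - p i * q i j)) ^ 2 ≤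
      K * ∑ i, ∑ j, q i j * (p i * μ j - p j * μ i) ^ 2 := by
  have hD : ∀ i, 0 ≤ ∑ j ∈ univ.erase i, q j i * (p j * μ i - p i * μ j) ^ 2 :=
    fun i => sum_nonneg fun j hj => mul_nonneg (hq j i (ne_of_mem_erase hj)) (sq_nonneg _)
  calc _ ≤ ∑ i, K * ∑ j ∈ univ.erase i, q j i * (p j * μ i - p i * μ j) ^ 2 :=
        sum_le_sum fun i _ => (sq_sum_erase_current_le hq hqrow hstat hμ i).trans
          (mul_le_mul_of_nonneg_right (hK i) (hD i))
    _ = K * ∑ i, ∑ j, q i j * (p i * μ j - p j * μ i) ^ 2 := by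
        rw [← mul_sum, sum_comm]
        congr 1
        exact sum_congr rfl fun i _ => sum_erase _ (by ring)

end

theorem nonadiabatic_ep_lower_bound_general (N : ℕ) (q : Fin N → Fin N → ℝ) (μ : Fin N → ℝ)
    (hq : ∀ i j, i ≠ j → 0 ≤ q i j)
    (hqrow : ∀ i, ∑ j, q i j = 0)
    (hμpos : ∀ i, 0 < μ i) (hμ1 : ∑ i, μ i = 1)
    (hstat : ∀ j, ∑ i, μ i * q i j = 0) :
    ∃ c₁ > (0 : ℝ), ∀ p : Fin N → ℝ, (∀ i, 0 < p i) → ∑ i, p i = 1 →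
      (1 / 2) * ∑ i, ∑ j, (p i * q i j - p j * q j i) *
          Real.log ((p i * μ j) / (p j * μ i)) ≥
        c₁ * ∑ i, (∑ j ∈ Finset.univ.erase i, (p j * q j i - p i * q i j)) ^ 2 := by
  obtain ⟨K, hK₀, hK⟩ : ∃ K > 0, ∀ i, (∑ j ∈ univ.erase i, q j i) / μ i ^ 2 ≤ K :=
    let ⟨K, hK⟩ := Finite.exists_le fun i => (∑ j ∈ univ.erase i, q j i) / μ i ^ 2
    ⟨max K 1, by positivity, fun i => (hK i).trans (le_max_left K 1)⟩
  refine ⟨1 / (4 * K), by positivity, fun p hp hp₁ => ?_⟩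
  have hcurrent := sum_sq_current_le (p := p) hq hqrow hstat hμpos hK
  have hep := sum_sum_mul_sq_div_four_le_nonadiabatic_ep hq hqrow hstat hμpos
    (le_one_of_sum_eq_one (fun i => (hμpos i).le) hμ1) hp
    (le_one_of_sum_eq_one (fun i => (hp i).le) hp₁)
  calc 1 / (4 * K) * ∑ i, (∑ j ∈ univ.erase i, (p j * q j i - p i * q i j)) ^ 2
      ≤ 1 / (4 * K) * (K * ∑ i, ∑ j, q i j * (p i * μ j - p j * μ i) ^ 2) :=
        mul_le_mul_of_nonneg_left hcurrent (by positivity)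
    _ = (∑ i, ∑ j, q i j * (p i * μ j - p j * μ i) ^ 2) / 4 := by field_simp
    _ ≤ _ := hep

theorem nonadiabatic_ep_lower_bound (N : ℕ) (q : Fin N → Fin N → ℝ) (μ : Fin N → ℝ)
    (hq : ∀ i j, i ≠ j → 0 ≤ q i j)
    (hqrow : ∀ i, ∑ j, q i j = 0)
    (hirr : ∀ i j : Fin N, i ≠ j → ∃ (m : ℕ) (c : Fin (m + 1) → Fin N),
      c 0 = i ∧ c (Fin.last m) = j ∧ ∀ k : Fin m, 0 < q (c k.castSucc) (c k.succ))
    (hμpos : ∀ i, 0 < μ i) (hμ1 : ∑ i, μ i = 1)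
    (hstat : ∀ j, ∑ i, μ i * q i j = 0) :
    ∃ c₁ > (0 : ℝ), ∀ p : Fin N → ℝ, (∀ i, 0 < p i) → ∑ i, p i = 1 →
      (1 / 2) * ∑ i, ∑ j, (p i * q i j - p j * q j i) *
          Real.log ((p i * μ j) / (p j * μ i)) ≥
        c₁ * ∑ i, (∑ j ∈ Finset.univ.erase i, (p j * q j i - p i * q i j)) ^ 2 :=
  nonadiabatic_ep_lower_bound_general N q μ hq hqrow hμpos hμ1 hstat
end

section
/- With the same setup (irreducible rate matrix Q, stationary distribution μ with all μ_i > 0, probability distribution p with all p_i > 0), the non-adiabatic entropy production rate satisfies e_p^{(na)} = Σ_{i,j} p_i q_ij·log((p_i μ_j)/(p_j μ_i)) ≥ (1/2)·Σ_{i,j: i≠j} (q_ij/μ_j)·(p_i μ_j − p_j μ_i)². -/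
/-!
Write `x_i = p_i / μ_i`, so that `p_i q_ij log((p_i μ_j)/(p_j μ_i)) = μ_i q_ij x_i log(x_i / x_j)`.
For `0 < x, y ≤ K` one has `y log(y/x) ≥ (y - x) + (y - x)² / (2K)`: the difference, as a function
of `x`, has derivative `(x - y)(1/x - 1/K)` and so is minimal at `x = y`. Since `p_i, μ_i ≤ 1`, the
choice `K = 1/(μ_i μ_j)` is admissible and turns the quadratic term into
`(q_ij / μ_j)(p_i μ_j - p_j μ_i)² / 2`. The linear terms `μ_i q_ij (x_i - x_j)` sum to zero because
the rows of `Q` sum to zero and `μ` is stationary.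
-/

open Finset

theorem sub_add_sq_div_le_mul_log_div {x y K : ℝ} (hx : 0 < x) (hy : 0 < y) (hxK : x ≤ K)
    (hyK : y ≤ K) :
    (y - x) + (y - x) ^ 2 / (2 * K) ≤ y * Real.log (y / x) := by
  set h : ℝ → ℝ := fun s => y * (Real.log y - Real.log s) - (y - s) - (y - s) ^ 2 / (2 * K)
  have hderiv : ∀ s, 0 < s → HasDerivAt h ((s - y) * (1 / s - 1 / K)) s := by
    intro s hs
    have hK : K ≠ 0 := (hx.trans_le hxK).ne'
    have hlin : HasDerivAt (fun s : ℝ => y - s) (-1) s := by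
      simpa using (hasDerivAt_id s).const_sub y
    have hsq : HasDerivAt (fun s : ℝ => (y - s) ^ 2 / (2 * K))
        (2 * (y - s) ^ 1 * -1 / (2 * K)) s :=
      (hlin.pow 2).div_const (2 * K)
    have hlog := ((Real.hasDerivAt_log hs.ne').const_sub (Real.log y)).const_mul y
    refine ((hlog.sub hlin).sub hsq).congr_deriv ?_
    field_simp
    ring
  have hcont : ∀ a b, 0 < a → ContinuousOn h (Set.Icc a b) := fun a b ha s hs =>
    (hderiv s (ha.trans_le hs.1)).continuousAt.continuousWithinAt
  have hmin : h y ≤ h x := by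
    rcases le_total x y with hxy | hyx
    · refine antitoneOn_of_hasDerivWithinAt_nonpos (f' := fun s => (s - y) * (1 / s - 1 / K))
        (convex_Icc x y) (hcont x y hx)
        (fun s hs => ?_) (fun s hs => ?_) ⟨le_rfl, hxy⟩ ⟨hxy, le_rfl⟩ hxy
      · rw [interior_Icc] at hs
        exact (hderiv s (hx.trans hs.1)).hasDerivWithinAt
      · rw [interior_Icc] at hs
        have hs0 : 0 < s := hx.trans hs.1
        exact mul_nonpos_of_nonpos_of_nonneg (by linarith [hs.2])
          (sub_nonneg.2 (one_div_le_one_div_of_le hs0 (by linarith [hs.2])))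
    · refine monotoneOn_of_hasDerivWithinAt_nonneg (f' := fun s => (s - y) * (1 / s - 1 / K))
        (convex_Icc y x) (hcont y x hy)
        (fun s hs => ?_) (fun s hs => ?_) ⟨le_rfl, hyx⟩ ⟨hyx, le_rfl⟩ hyx
      · rw [interior_Icc] at hs
        exact (hderiv s (hy.trans hs.1)).hasDerivWithinAt
      · rw [interior_Icc] at hs
        have hs0 : 0 < s := hy.trans hs.1
        exact mul_nonneg (by linarith [hs.1])
          (sub_nonneg.2 (one_div_le_one_div_of_le hs0 (by linarith [hs.2])))
  simp only [h, sub_self, ne_eq, OfNat.ofNat_ne_zero, not_false_eq_true, zero_pow, zero_div,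
    mul_zero] at hmin
  rw [Real.log_div hy.ne' hx.ne']
  linarith

theorem linear_add_sq_le_mul_mul_log_ratio {qij μi μj pi pj : ℝ} (hq : 0 ≤ qij) (hμi : 0 < μi)
    (hμj : 0 < μj) (hpi : 0 < pi) (hpj : 0 < pj) (hμi1 : μi ≤ 1) (hμj1 : μj ≤ 1) (hpi1 : pi ≤ 1)
    (hpj1 : pj ≤ 1) :
    μi * qij * (pi / μi - pj / μj) + qij / μj * (pi * μj - pj * μi) ^ 2 / 2 ≤
      pi * qij * Real.log (pi * μj / (pj * μi)) := by
  have hx : pj / μj ≤ 1 / (μi * μj) := by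
    rw [div_le_div_iff₀ hμj (by positivity)]
    nlinarith [mul_le_one₀ hpj1 hμi.le hμi1]
  have hy : pi / μi ≤ 1 / (μi * μj) := by
    rw [div_le_div_iff₀ hμi (by positivity)]
    nlinarith [mul_le_one₀ hpi1 hμj.le hμj1]
  have key := mul_le_mul_of_nonneg_left
    (sub_add_sq_div_le_mul_log_div (div_pos hpj hμj) (div_pos hpi hμi) hx hy)
    (mul_nonneg hμi.le hq)
  refine (le_of_eq ?_).trans (key.trans (le_of_eq ?_))
  · field_simp
  · rw [div_div_div_eq, mul_comm μi pj]
    field_simp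

theorem sum_sum_stationary_mul_sub_eq_zero {ι : Type*} [Fintype ι] (q : ι → ι → ℝ) (μ f : ι → ℝ)
    (hqrow : ∀ i, ∑ j, q i j = 0) (hstat : ∀ j, ∑ i, μ i * q i j = 0) :
    ∑ i, ∑ j, μ i * q i j * (f i - f j) = 0 := by
  have hrow : ∑ i, ∑ j, μ i * q i j * f i = 0 := by
    simp [← sum_mul, ← mul_sum, hqrow]
  have hcol : ∑ i, ∑ j, μ i * q i j * f j = 0 := by
    rw [sum_comm]
    simp [← sum_mul, hstat]
  simp only [mul_sub, sum_sub_distrib, hrow, hcol, sub_zero]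

theorem nonadiabatic_ep_intermediate_bound_general (N : ℕ) (q : Fin N → Fin N → ℝ)
    (μ p : Fin N → ℝ)
    (hq : ∀ i j, i ≠ j → 0 ≤ q i j)
    (hqrow : ∀ i, ∑ j, q i j = 0)
    (hμpos : ∀ i, 0 < μ i) (hμ1 : ∑ i, μ i = 1)
    (hstat : ∀ j, ∑ i, μ i * q i j = 0)
    (hppos : ∀ i, 0 < p i) (hp1 : ∑ i, p i = 1) :
    ∑ i, ∑ j, p i * q i j * Real.log ((p i * μ j) / (p j * μ i)) ≥
      (1 / 2) * ∑ i, ∑ j ∈ Finset.univ.erase i,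
        (q i j / μ j) * (p i * μ j - p j * μ i) ^ 2 := by
  have hμle : ∀ i, μ i ≤ 1 := fun i =>
    hμ1 ▸ single_le_sum (fun j _ => (hμpos j).le) (mem_univ i)
  have hple : ∀ i, p i ≤ 1 := fun i =>
    hp1 ▸ single_le_sum (fun j _ => (hppos j).le) (mem_univ i)
  have hterm : ∀ i j, μ i * q i j * (p i / μ i - p j / μ j)
      + q i j / μ j * (p i * μ j - p j * μ i) ^ 2 / 2
      ≤ p i * q i j * Real.log ((p i * μ j) / (p j * μ i)) := by
    intro i j
    by_cases hij : i = j
    · subst hij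
      simp [div_self (mul_pos (hppos i) (hμpos i)).ne']
    · exact linear_add_sq_le_mul_mul_log_ratio (hq i j hij) (hμpos i) (hμpos j) (hppos i)
        (hppos j) (hμle i) (hμle j) (hple i) (hple j)
  calc (1 / 2) * ∑ i, ∑ j ∈ univ.erase i, q i j / μ j * (p i * μ j - p j * μ i) ^ 2
      = ∑ i, ∑ j, μ i * q i j * (p i / μ i - p j / μ j)
          + ∑ i, ∑ j, q i j / μ j * (p i * μ j - p j * μ i) ^ 2 / 2 := by
        rw [sum_sum_stationary_mul_sub_eq_zero q μ (fun i => p i / μ i) hqrow hstat, zero_add,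
          mul_sum]
        refine sum_congr rfl fun i _ => ?_
        rw [sum_erase _ (by simp), mul_sum]
        exact sum_congr rfl fun j _ => by ring
    _ ≤ ∑ i, ∑ j, p i * q i j * Real.log ((p i * μ j) / (p j * μ i)) := by
        rw [← sum_add_distrib]
        exact sum_le_sum fun i _ =>
          sum_add_distrib.symm.trans_le (sum_le_sum fun j _ => hterm i j)

theorem nonadiabatic_ep_intermediate_bound (N : ℕ) (q : Fin N → Fin N → ℝ)
    (μ p : Fin N → ℝ)
    (hq : ∀ i j, i ≠ j → 0 ≤ q i j)
    (hqrow : ∀ i, ∑ j, q i j = 0)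
    (hirr : ∀ i j : Fin N, i ≠ j → ∃ (m : ℕ) (c : Fin (m + 1) → Fin N),
      c 0 = i ∧ c (Fin.last m) = j ∧ ∀ k : Fin m, 0 < q (c k.castSucc) (c k.succ))
    (hμpos : ∀ i, 0 < μ i) (hμ1 : ∑ i, μ i = 1)
    (hstat : ∀ j, ∑ i, μ i * q i j = 0)
    (hppos : ∀ i, 0 < p i) (hp1 : ∑ i, p i = 1) :
    ∑ i, ∑ j, p i * q i j * Real.log ((p i * μ j) / (p j * μ i)) ≥
      (1 / 2) * ∑ i, ∑ j ∈ Finset.univ.erase i,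
        (q i j / μ j) * (p i * μ j - p j * μ i) ^ 2 :=
  nonadiabatic_ep_intermediate_bound_general N q μ p hq hqrow hμpos hμ1 hstat hppos hp1
end

section
/- Let Q be a rate matrix with stationary distribution μ (all μ_i > 0), and set M = max_{i≠j} q_ij > 0. Then for any probability distribution p with all p_i > 0, the adiabatic entropy production rate e_p^{(ad)} = (1/2)·Σ_{i,j} (p_i q_ij − p_j q_ji)·log((μ_i q_ij)/(μ_j q_ji)) satisfies e_p^{(ad)} ≥ (1/(2M))·Σ_{i,j} p_i·(μ_i q_ij − μ_j q_ji)². -/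
open Finset


lemma key_ineq {M a b : ℝ} (hM : 0 < M) (ha : 0 < a) (haM : a ≤ M)
    (hb : 0 < b) (hbM : b ≤ M) :
    a - b + (a - b) ^ 2 / (2 * M) ≤ a * Real.log (a / b) := by
  set g : ℝ → ℝ := fun x => a * Real.log a - a * Real.log x + (x - a) - (a - x) ^ 2 / (2 * M)
    with hgdef
  have hderiv : ∀ x : ℝ, 0 < x →
      HasDerivAt g (-(a * x⁻¹) + 1 - 2 * (a - x) ^ 1 * (-1) / (2 * M)) x := by
    intro x hx
    exact ((((Real.hasDerivAt_log hx.ne').const_mul a).const_sub (a * Real.log a)).add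
      ((hasDerivAt_id x).sub_const a)).sub
      ((((hasDerivAt_id x).const_sub a).pow 2).div_const (2 * M))
  have hga : g a = 0 := by simp [hgdef]
  have hcont : ∀ s : Set ℝ, (∀ x ∈ s, 0 < x) → ContinuousOn g s := fun s hs x hx =>
    (hderiv x (hs x hx)).continuousAt.continuousWithinAt
  have hdval : ∀ x : ℝ, 0 < x → x ≤ M →
      (-(a * x⁻¹) + 1 - 2 * (a - x) ^ 1 * (-1) / (2 * M)) * (x * M) = (a - x) * (x - M) := by
    intro x hx _
    field_simp
    ring
  have hgb : 0 ≤ g b := by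
    rcases le_total b a with hba | hab
    · have hanti : AntitoneOn g (Set.Icc b a) := by
        refine antitoneOn_of_deriv_nonpos (convex_Icc b a)
          (hcont _ fun x hx => lt_of_lt_of_le hb hx.1) (fun x hx => ?_) (fun x hx => ?_)
        · rw [interior_Icc] at hx
          exact (hderiv x (hb.trans hx.1)).differentiableAt.differentiableWithinAt
        · rw [interior_Icc] at hx
          have hx0 : 0 < x := hb.trans hx.1
          rw [(hderiv x hx0).deriv]
          have hkey := hdval x hx0 (hx.2.le.trans haM)
          nlinarith [mul_pos hx0 hM, hx.2, mul_nonneg (sub_nonneg.2 hx.2.le) (sub_nonneg.2 (hx.2.le.trans haM))]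
      have := hanti (Set.left_mem_Icc.2 hba) (Set.right_mem_Icc.2 hba) hba
      linarith [hga ▸ this]
    · have hmono : MonotoneOn g (Set.Icc a b) := by
        refine monotoneOn_of_deriv_nonneg (convex_Icc a b)
          (hcont _ fun x hx => lt_of_lt_of_le ha hx.1) (fun x hx => ?_) (fun x hx => ?_)
        · rw [interior_Icc] at hx
          exact (hderiv x (ha.trans hx.1)).differentiableAt.differentiableWithinAt
        · rw [interior_Icc] at hx
          have hx0 : 0 < x := ha.trans hx.1
          rw [(hderiv x hx0).deriv]
          have hkey := hdval x hx0 (hx.2.le.trans hbM)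
          nlinarith [mul_pos hx0 hM, hx.1, hx.2, mul_nonneg (sub_nonneg.2 hx.1.le) (sub_nonneg.2 (hx.2.le.trans hbM))]
      have := hmono (Set.left_mem_Icc.2 hab) (Set.right_mem_Icc.2 hab) hab
      linarith [hga ▸ this]
  have hglog : g b = a * Real.log (a / b) - (a - b) - (a - b) ^ 2 / (2 * M) := by
    rw [hgdef]
    simp only
    rw [Real.log_div ha.ne' hb.ne']
    ring
  rw [hglog] at hgb
  linarith

theorem adiabatic_ep_lower_bound (N : ℕ) (q : Fin N → Fin N → ℝ)
    (μ p : Fin N → ℝ) (M : ℝ)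
    (hq : ∀ i j, i ≠ j → 0 ≤ q i j)
    (hqrow : ∀ i, ∑ j, q i j = 0)
    (hqsym : ∀ i j, i ≠ j → (0 < q i j ↔ 0 < q j i))
    (hμpos : ∀ i, 0 < μ i) (hμ1 : ∑ i, μ i = 1)
    (hstat : ∀ j, ∑ i, μ i * q i j = 0)
    (hM : ∀ i j, i ≠ j → q i j ≤ M) (hMpos : 0 < M)
    (hppos : ∀ i, 0 < p i) (hp1 : ∑ i, p i = 1) :
    (1 / 2) * ∑ i, ∑ j, (p i * q i j - p j * q j i) *
        Real.log ((μ i * q i j) / (μ j * q j i)) ≥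
      (1 / (2 * M)) * ∑ i, ∑ j, p i * (μ i * q i j - μ j * q j i) ^ 2 := by
  set L : Fin N → Fin N → ℝ := fun i j => Real.log ((μ i * q i j) / (μ j * q j i)) with hLdef
  have hLanti : ∀ i j, L j i = - L i j := by
    intro i j
    rw [hLdef]
    simp only
    rw [← Real.log_inv, inv_div]
  have hμle1 : ∀ i, μ i ≤ 1 := by
    intro i
    rw [← hμ1]
    exact Finset.single_le_sum (fun j _ => (hμpos j).le) (mem_univ i)
  -- fold: LHS = ∑∑ p i q i j L i j
  have hfold : ∑ i, ∑ j, (p i * q i j - p j * q j i) * L i j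
      = 2 * ∑ i, ∑ j, p i * q i j * L i j := by
    have h2 : ∑ i, ∑ j, p j * q j i * L i j = - ∑ i, ∑ j, p i * q i j * L i j := by
      rw [Finset.sum_comm, ← Finset.sum_neg_distrib]
      refine Finset.sum_congr rfl fun j _ => ?_
      rw [← Finset.sum_neg_distrib]
      refine Finset.sum_congr rfl fun i _ => ?_
      rw [hLanti i j]
      ring
    simp only [sub_mul, Finset.sum_sub_distrib]
    rw [h2]
    ring
  -- pointwise bound
  have hpt : ∀ i j, p i / μ i * (μ i * q i j - μ j * q j i)
      + p i * (μ i * q i j - μ j * q j i) ^ 2 / (2 * M) ≤ p i * q i j * L i j := by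
    intro i j
    rcases eq_or_ne i j with rfl | hij
    · have hL0 : L i i = 0 := by
        rcases eq_or_ne (μ i * q i i) 0 with h | h
        · simp [hLdef, h]
        · simp [hLdef, div_self h]
      simp [hL0]
    · rcases lt_or_ge 0 (q i j) with hqij | hqij
      · have hqji : 0 < q j i := (hqsym i j hij).mp hqij
        set a := μ i * q i j with hadef
        set b := μ j * q j i with hbdef
        have ha : 0 < a := mul_pos (hμpos i) hqij
        have hb : 0 < b := mul_pos (hμpos j) hqji
        have haM : a ≤ M := le_trans
          (mul_le_of_le_one_left hqij.le (hμle1 i)) (hM i j hij)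
        have hbM : b ≤ M := le_trans
          (mul_le_of_le_one_left hqji.le (hμle1 j)) (hM j i hij.symm)
        have hkey := key_ineq hMpos ha haM hb hbM
        have hc : 0 < p i / μ i := div_pos (hppos i) (hμpos i)
        have hmul := mul_le_mul_of_nonneg_left hkey hc.le
        have hμne : μ i ≠ 0 := (hμpos i).ne'
        have hLab : L i j = Real.log (a / b) := rfl
        have heq : p i / μ i * (a * Real.log (a / b)) = p i * q i j * L i j := by
          rw [hLab, hadef, ← mul_assoc, div_mul_eq_mul_div, mul_comm (μ i) (q i j),
            ← mul_assoc, mul_div_assoc, div_self hμne, mul_one]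
        have hple : p i ≤ p i / μ i := by
          rw [le_div_iff₀ (hμpos i)]
          nlinarith [hppos i, hμle1 i, hμpos i]
        have hq2 : p i * (a - b) ^ 2 / (2 * M) ≤ p i / μ i * ((a - b) ^ 2 / (2 * M)) := by
          rw [mul_div_assoc]
          exact mul_le_mul_of_nonneg_right hple (by positivity)
        rw [heq] at hmul
        nlinarith [hmul, hq2]
      · have hqij0 : q i j = 0 := le_antisymm hqij (hq i j hij)
        have hqji0 : q j i = 0 := by
          by_contra h
          exact absurd ((hqsym i j hij).mpr (lt_of_le_of_ne (hq j i hij.symm) (Ne.symm h))) (not_lt.2 hqij)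
        simp [hqij0, hqji0]
  -- zero sum of linear part
  have hzero : ∑ i, ∑ j, p i / μ i * (μ i * q i j - μ j * q j i) = 0 := by
    refine Finset.sum_eq_zero fun i _ => ?_
    rw [← Finset.mul_sum, Finset.sum_sub_distrib, ← Finset.mul_sum, hqrow i, hstat i,
      mul_zero, sub_zero, mul_zero]
  -- sum the pointwise bound
  have hsum : ∑ i, ∑ j, (p i / μ i * (μ i * q i j - μ j * q j i)
      + p i * (μ i * q i j - μ j * q j i) ^ 2 / (2 * M))
      ≤ ∑ i, ∑ j, p i * q i j * L i j :=
    Finset.sum_le_sum fun i _ => Finset.sum_le_sum fun j _ => hpt i j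
  have hsplit : ∑ i, ∑ j, (p i / μ i * (μ i * q i j - μ j * q j i)
      + p i * (μ i * q i j - μ j * q j i) ^ 2 / (2 * M))
      = ∑ i, ∑ j, p i / μ i * (μ i * q i j - μ j * q j i)
        + ∑ i, ∑ j, p i * (μ i * q i j - μ j * q j i) ^ 2 / (2 * M) := by
    rw [← Finset.sum_add_distrib]
    exact Finset.sum_congr rfl fun i _ => Finset.sum_add_distrib
  have hquad : ∑ i, ∑ j, p i * (μ i * q i j - μ j * q j i) ^ 2 / (2 * M)
      = (1 / (2 * M)) * ∑ i, ∑ j, p i * (μ i * q i j - μ j * q j i) ^ 2 := by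
    rw [Finset.mul_sum]
    refine Finset.sum_congr rfl fun i _ => ?_
    rw [Finset.mul_sum]
    exact Finset.sum_congr rfl fun j _ => by ring
  rw [ge_iff_le, hfold]
  rw [hsplit, hzero, zero_add, hquad] at hsum
  linarith
end

section
/- Let Q be a rate matrix with stationary distribution μ (all μ_i > 0) and let p be a probability distribution with all p_i > 0. If the adiabatic entropy production rate e_p^{(ad)} = (1/2)·Σ_{i,j}(p_i q_ij − p_j q_ji)·log((μ_i q_ij)/(μ_j q_ji)) equals zero, then the detailed balance condition μ_i q_ij = μ_j q_ji holds for all pairs i, j. Conversely, if detailed balance holds then e_p^{(ad)} = 0. -/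
/-!
With the stationary fluxes `w i j = μ i * q i j`, the logarithm `log (w i j / w j i)` is
antisymmetric, so the symmetrised sum equals `∑ i j, p i * q i j * log (w i j / w j i)`.
Since rows and columns of `w` sum to zero, the inner sums may be completed to generalised
Kullback–Leibler divergences `D a b = a * log (a / b) + b - a`, giving
`e = ∑ i, (p i / μ i) * ∑ j, D (w i j) (w j i)`. Each `D (w i j) (w j i) = w j i * klFun (w i j / w j i)`
is nonnegative and vanishes exactly when `w i j = w j i`; the symmetric support of `q` rules out
the junk value `log (a / 0) = 0`, which would make `D a 0 = -a` negative.
-/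

open Finset Real InformationTheory

noncomputable def genKLDiv (a b : ℝ) : ℝ := a * log (a / b) + b - a

lemma genKLDiv_self (a : ℝ) : genKLDiv a a = 0 := by
  rcases eq_or_ne a 0 with rfl | ha
  · simp [genKLDiv]
  · simp [genKLDiv, div_self ha]

lemma genKLDiv_eq_mul_klFun {a b : ℝ} (hb : b ≠ 0) : genKLDiv a b = b * klFun (a / b) := by
  rw [genKLDiv, klFun_apply]
  field_simp

lemma genKLDiv_nonneg {a b : ℝ} (ha : 0 ≤ a) (hb : 0 ≤ b) (hba : b = 0 → a = 0) :
    0 ≤ genKLDiv a b := by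
  rcases hb.eq_or_lt with rfl | hb
  · simp [hba rfl, genKLDiv]
  · rw [genKLDiv_eq_mul_klFun hb.ne']
    exact mul_nonneg hb.le (klFun_nonneg (div_nonneg ha hb.le))

lemma genKLDiv_eq_zero_iff {a b : ℝ} (ha : 0 ≤ a) (hb : 0 ≤ b) (hba : b = 0 → a = 0) :
    genKLDiv a b = 0 ↔ a = b := by
  rcases hb.eq_or_lt with rfl | hb
  · simp [hba rfl, genKLDiv]
  · rw [genKLDiv_eq_mul_klFun hb.ne', mul_eq_zero, klFun_eq_zero_iff (div_nonneg ha hb.le),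
      div_eq_one_iff_eq hb.ne']
    simp [hb.ne']

section Sums

variable {ι : Type*} [Fintype ι]

lemma half_sum_sub_swap_mul_of_antisymm {f L : ι → ι → ℝ} (hL : ∀ i j, L j i = -L i j) :
    (1 / 2) * ∑ i, ∑ j, (f i j - f j i) * L i j = ∑ i, ∑ j, f i j * L i j := by
  have hswap : ∑ i, ∑ j, f j i * L i j = -∑ i, ∑ j, f i j * L i j := by
    rw [sum_comm, ← sum_neg_distrib]
    refine sum_congr rfl fun i _ => ?_
    rw [← sum_neg_distrib]
    refine sum_congr rfl fun j _ => ?_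
    rw [hL, mul_neg]
  simp only [sub_mul, sum_sub_distrib, hswap]
  ring

lemma sum_mul_log_div_eq_sum_genKLDiv (w : ι → ι → ℝ) (i : ι) (hrow : ∑ j, w i j = 0)
    (hcol : ∑ j, w j i = 0) :
    ∑ j, w i j * log (w i j / w j i) = ∑ j, genKLDiv (w i j) (w j i) := by
  simp only [genKLDiv, sum_sub_distrib, sum_add_distrib, hrow, hcol, add_zero, sub_zero]

lemma sum_mul_sum_eq_zero_iff {r : ι → ℝ} {D : ι → ι → ℝ} (hr : ∀ i, 0 < r i)
    (hD : ∀ i j, 0 ≤ D i j) : ∑ i, r i * ∑ j, D i j = 0 ↔ ∀ i j, D i j = 0 := by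
  rw [Fintype.sum_eq_zero_iff_of_nonneg fun i => mul_nonneg (hr i).le (sum_nonneg fun j _ => hD i j)]
  simp only [funext_iff, Pi.zero_apply, mul_eq_zero, (hr _).ne', false_or]
  exact forall_congr' fun i => (Fintype.sum_eq_zero_iff_of_nonneg (hD i)).trans funext_iff

end Sums

section Fluxes

variable {ι : Type*} {q : ι → ι → ℝ} {μ : ι → ℝ}
  (hq : ∀ i j, i ≠ j → 0 ≤ q i j) (hqsym : ∀ i j, i ≠ j → (0 < q i j ↔ 0 < q j i))
  (hμpos : ∀ i, 0 < μ i)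
include hq hqsym hμpos

lemma flux_eq_zero_of_swap {i j : ι} (hij : i ≠ j) (h : μ j * q j i = 0) : μ i * q i j = 0 := by
  have hqji : q j i = 0 := (mul_eq_zero.mp h).resolve_left (hμpos j).ne'
  have hqij : ¬ 0 < q i j := fun hpos => ((hqsym i j hij).mp hpos).ne' hqji
  rw [le_antisymm (not_lt.mp hqij) (hq i j hij), mul_zero]

lemma genKLDiv_flux_nonneg (i j : ι) : 0 ≤ genKLDiv (μ i * q i j) (μ j * q j i) := by
  rcases eq_or_ne i j with rfl | hij
  · rw [genKLDiv_self]
  · exact genKLDiv_nonneg (mul_nonneg (hμpos i).le (hq i j hij))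
      (mul_nonneg (hμpos j).le (hq j i hij.symm)) (flux_eq_zero_of_swap hq hqsym hμpos hij)

lemma genKLDiv_flux_eq_zero_iff (i j : ι) :
    genKLDiv (μ i * q i j) (μ j * q j i) = 0 ↔ μ i * q i j = μ j * q j i := by
  rcases eq_or_ne i j with rfl | hij
  · simp [genKLDiv_self]
  · exact genKLDiv_eq_zero_iff (mul_nonneg (hμpos i).le (hq i j hij))
      (mul_nonneg (hμpos j).le (hq j i hij.symm)) (flux_eq_zero_of_swap hq hqsym hμpos hij)

end Fluxes

theorem adiabatic_ep_zero_iff_detailed_balance_general (N : ℕ) (q : Fin N → Fin N → ℝ)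
    (μ p : Fin N → ℝ)
    (hq : ∀ i j, i ≠ j → 0 ≤ q i j)
    (hqrow : ∀ i, ∑ j, q i j = 0)
    (hqsym : ∀ i j, i ≠ j → (0 < q i j ↔ 0 < q j i))
    (hμpos : ∀ i, 0 < μ i)
    (hstat : ∀ j, ∑ i, μ i * q i j = 0)
    (hppos : ∀ i, 0 < p i) :
    (1 / 2) * ∑ i, ∑ j, (p i * q i j - p j * q j i) *
        Real.log ((μ i * q i j) / (μ j * q j i)) = 0 ↔
      ∀ i j, μ i * q i j = μ j * q j i := by
  have hweights : ∀ i, ∑ j, p i * q i j * log ((μ i * q i j) / (μ j * q j i)) =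
      p i / μ i * ∑ j, genKLDiv (μ i * q i j) (μ j * q j i) := by
    intro i
    rw [← sum_mul_log_div_eq_sum_genKLDiv (fun i j => μ i * q i j) i
      (by rw [← mul_sum, hqrow, mul_zero]) (hstat i), mul_sum]
    refine sum_congr rfl fun j _ => ?_
    field_simp [(hμpos i).ne']
  rw [half_sum_sub_swap_mul_of_antisymm fun i j => by rw [← log_inv, inv_div],
    sum_congr rfl fun i _ => hweights i,
    sum_mul_sum_eq_zero_iff (fun i => div_pos (hppos i) (hμpos i))
      (genKLDiv_flux_nonneg hq hqsym hμpos)]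
  exact forall₂_congr fun i j => genKLDiv_flux_eq_zero_iff hq hqsym hμpos i j

theorem adiabatic_ep_zero_iff_detailed_balance (N : ℕ) (q : Fin N → Fin N → ℝ)
    (μ p : Fin N → ℝ)
    (hq : ∀ i j, i ≠ j → 0 ≤ q i j)
    (hqrow : ∀ i, ∑ j, q i j = 0)
    (hqsym : ∀ i j, i ≠ j → (0 < q i j ↔ 0 < q j i))
    (hμpos : ∀ i, 0 < μ i) (hμ1 : ∑ i, μ i = 1)
    (hstat : ∀ j, ∑ i, μ i * q i j = 0)
    (hppos : ∀ i, 0 < p i) (hp1 : ∑ i, p i = 1) :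
    (1 / 2) * ∑ i, ∑ j, (p i * q i j - p j * q j i) *
        Real.log ((μ i * q i j) / (μ j * q j i)) = 0 ↔
      ∀ i j, μ i * q i j = μ j * q j i :=
  adiabatic_ep_zero_iff_detailed_balance_general N q μ p hq hqrow hqsym hμpos hstat hppos
end

section
/- Let Q be a rate matrix on N states with M = max_{i≠j} q_ij > 0. Then for any probability distribution p, the total entropy production rate e_p = (1/2)·Σ_{i,j}(p_i q_ij − p_j q_ji)·log((p_i q_ij)/(p_j q_ji)) satisfies e_p ≥ (1/(2M))·Σ_{i,j} (p_i q_ij − p_j q_ji)². -/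
open Finset

private lemma ep_helper {M a b : ℝ} (hM : 0 < M) (hb : 0 < b) (hba : b ≤ a)
    (haM : a ≤ M) : (a - b) ^ 2 / M ≤ (a - b) * Real.log (a / b) := by
  have ha : 0 < a := lt_of_lt_of_le hb hba
  have h1 : (a - b) / a ≤ Real.log (a / b) := by
    have h2 := Real.log_le_sub_one_of_pos (div_pos hb ha)
    have h3 : Real.log (a / b) = -Real.log (b / a) := by
      rw [Real.log_div ha.ne' hb.ne', Real.log_div hb.ne' ha.ne']; ring
    rw [h3, div_le_iff₀ ha]
    have h4 : b / a * a = b := div_mul_cancel₀ b ha.ne'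
    nlinarith [mul_le_mul_of_nonneg_right h2 ha.le]
  calc (a - b) ^ 2 / M ≤ (a - b) ^ 2 / a :=
        div_le_div_of_nonneg_left (sq_nonneg _) ha haM
    _ = (a - b) * ((a - b) / a) := by ring
    _ ≤ (a - b) * Real.log (a / b) :=
        mul_le_mul_of_nonneg_left h1 (by linarith)

private lemma ep_key {M a b : ℝ} (hM : 0 < M) (ha : 0 ≤ a) (hb : 0 ≤ b)
    (haM : a ≤ M) (hbM : b ≤ M) (hiff : 0 < a ↔ 0 < b) :
    (a - b) ^ 2 / M ≤ (a - b) * Real.log (a / b) := by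
  rcases ha.eq_or_lt with h0 | hapos
  · have : b = 0 := by
      by_contra h
      exact absurd (hiff.mpr (lt_of_le_of_ne hb (Ne.symm h))) (by rw [← h0]; exact lt_irrefl 0)
    simp [← h0, this]
  · have hbpos : 0 < b := hiff.mp hapos
    rcases le_total b a with h | h
    · exact ep_helper hM hbpos h haM
    · have hsym1 : (a - b) * Real.log (a / b) = (b - a) * Real.log (b / a) := by
        rw [Real.log_div hapos.ne' hbpos.ne', Real.log_div hbpos.ne' hapos.ne']; ring
      have hsym2 : (a - b) ^ 2 = (b - a) ^ 2 := by ring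
      rw [hsym1, hsym2]
      exact ep_helper hM hapos h hbM

theorem total_ep_lower_bound (N : ℕ) (q : Fin N → Fin N → ℝ)
    (p : Fin N → ℝ) (M : ℝ)
    (hq : ∀ i j, i ≠ j → 0 ≤ q i j)
    (hqrow : ∀ i, ∑ j, q i j = 0)
    (hqsym : ∀ i j, i ≠ j → (0 < q i j ↔ 0 < q j i))
    (hM : ∀ i j, i ≠ j → q i j ≤ M) (hMpos : 0 < M)
    (hppos : ∀ i, 0 < p i) (hp1 : ∑ i, p i = 1) :
    (1 / 2) * ∑ i, ∑ j, (p i * q i j - p j * q j i) *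
        Real.log ((p i * q i j) / (p j * q j i)) ≥
      (1 / (2 * M)) * ∑ i, ∑ j, (p i * q i j - p j * q j i) ^ 2 := by
  have hple : ∀ i, p i ≤ 1 := by
    intro i
    have := Finset.single_le_sum (f := p) (fun j _ => (hppos j).le) (mem_univ i)
    linarith [this, hp1]
  rw [ge_iff_le, Finset.mul_sum, Finset.mul_sum]
  apply Finset.sum_le_sum
  intro i _
  rw [Finset.mul_sum, Finset.mul_sum]
  apply Finset.sum_le_sum
  intro j _
  by_cases hij : i = j
  · subst hij; simp
  · set a := p i * q i j with ha_def
    set b := p j * q j i with hb_def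
    have ha : 0 ≤ a := mul_nonneg (hppos i).le (hq i j hij)
    have hb : 0 ≤ b := mul_nonneg (hppos j).le (hq j i (Ne.symm hij))
    have haM : a ≤ M := by
      calc a ≤ 1 * q i j := by
            apply mul_le_mul_of_nonneg_right (hple i) (hq i j hij)
        _ = q i j := one_mul _
        _ ≤ M := hM i j hij
    have hbM : b ≤ M := by
      calc b ≤ 1 * q j i := by
            apply mul_le_mul_of_nonneg_right (hple j) (hq j i (Ne.symm hij))
        _ = q j i := one_mul _
        _ ≤ M := hM j i (Ne.symm hij)
    have hiff : 0 < a ↔ 0 < b := by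
      constructor
      · intro h
        rw [ha_def] at h
        have hqij : 0 < q i j := by
          by_contra hc
          push_neg at hc
          nlinarith [hppos i]
        exact mul_pos (hppos j) ((hqsym i j hij).mp hqij)
      · intro h
        rw [hb_def] at h
        have hqji : 0 < q j i := by
          by_contra hc
          push_neg at hc
          nlinarith [hppos j]
        exact mul_pos (hppos i) ((hqsym i j hij).mpr hqji)
    have key := ep_key hMpos ha hb haM hbM hiff
    have heq : 1 / (2 * M) * (a - b) ^ 2 = ((a - b) ^ 2 / M) * (1 / 2) := by
      field_simp
    rw [heq]
    linarith
end

section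
/- For an irreducible rate matrix Q with stationary distribution μ (all μ_i > 0), a probability distribution p satisfies: the non-adiabatic entropy production rate e_p^{(na)} vanishes if and only if p is a stationary distribution of Q, i.e., Σ_{j≠i}(p_j q_ji − p_i q_ij) = 0 for all i; moreover by uniqueness of the stationary distribution this holds if and only if p = μ. -/
open Finset

theorem nonadiabatic_ep_zero_iff_stationary (N : ℕ) (q : Fin N → Fin N → ℝ)
    (μ p : Fin N → ℝ)
    (hq : ∀ i j, i ≠ j → 0 ≤ q i j)
    (hqrow : ∀ i, ∑ j, q i j = 0)
    (hirr : ∀ i j : Fin N, i ≠ j → ∃ (m : ℕ) (c : Fin (m + 1) → Fin N),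
      c 0 = i ∧ c (Fin.last m) = j ∧ ∀ k : Fin m, 0 < q (c k.castSucc) (c k.succ))
    (hμpos : ∀ i, 0 < μ i) (hμ1 : ∑ i, μ i = 1)
    (hstat : ∀ j, ∑ i, μ i * q i j = 0)
    (hppos : ∀ i, 0 < p i) (hp1 : ∑ i, p i = 1) :
    ((1 / 2) * ∑ i, ∑ j, (p i * q i j - p j * q j i) *
          Real.log ((p i * μ j) / (p j * μ i)) = 0 ↔
        ∀ i, ∑ j ∈ Finset.univ.erase i, (p j * q j i - p i * q i j) = 0) ∧
      ((1 / 2) * ∑ i, ∑ j, (p i * q i j - p j * q j i) *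
          Real.log ((p i * μ j) / (p j * μ i)) = 0 ↔ p = μ) := by
  classical
  have hNpos : 0 < N := by
    rcases Nat.eq_zero_or_pos N with h | h
    · subst h; simp at hp1
    · exact h
  set r : Fin N → ℝ := fun i => p i / μ i with hrdef
  have hrpos : ∀ i, 0 < r i := fun i => div_pos (hppos i) (hμpos i)
  have hpr : ∀ i, p i = r i * μ i := by
    intro i
    simp only [hrdef]
    rw [div_mul_cancel₀ _ (ne_of_gt (hμpos i))]
  set L : Fin N → ℝ := fun i => Real.log (r i) with hLdef
  have hlog : ∀ i j, Real.log ((p i * μ j) / (p j * μ i)) = L i - L j := by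
    intro i j
    have h1 : (p i * μ j) / (p j * μ i) = r i / r j := by
      simp only [hrdef]
      field_simp
    rw [h1]
    simp only [hLdef]
    rw [Real.log_div (ne_of_gt (hrpos i)) (ne_of_gt (hrpos j))]
  set E := (1/2 : ℝ) * ∑ i, ∑ j, (p i * q i j - p j * q j i) *
      Real.log ((p i * μ j) / (p j * μ i)) with hEdef
  -- q i i ≤ 0
  have hq' : ∀ i, q i i ≤ 0 := by
    intro i
    have h1 := hqrow i
    have h2 : ∑ j, q i j = q i i + ∑ j ∈ univ.erase i, q i j :=
      (Finset.add_sum_erase _ _ (mem_univ i)).symm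
    have h3 : 0 ≤ ∑ j ∈ univ.erase i, q i j :=
      Finset.sum_nonneg fun j hj => hq i j (Ne.symm (Finset.mem_erase.mp hj).1)
    linarith
  -- rewrite E
  have hE1 : E = ∑ i, ∑ j, p i * q i j * (L i - L j) := by
    have hswap : ∑ i, ∑ j, p j * q j i * (L i - L j)
        = - ∑ i, ∑ j, p i * q i j * (L i - L j) := by
      rw [Finset.sum_comm]
      rw [← Finset.sum_neg_distrib]
      apply Finset.sum_congr rfl; intro i _
      rw [← Finset.sum_neg_distrib]
      apply Finset.sum_congr rfl; intro j _
      ring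
    calc E = (1/2 : ℝ) * ∑ i, ∑ j, (p i * q i j - p j * q j i) * (L i - L j) := by
          rw [hEdef]; congr 1
          apply Finset.sum_congr rfl; intro i _
          apply Finset.sum_congr rfl; intro j _
          rw [hlog]
      _ = (1/2 : ℝ) * ((∑ i, ∑ j, p i * q i j * (L i - L j))
            - ∑ i, ∑ j, p j * q j i * (L i - L j)) := by
          congr 1
          rw [← Finset.sum_sub_distrib]
          apply Finset.sum_congr rfl; intro i _
          rw [← Finset.sum_sub_distrib]
          apply Finset.sum_congr rfl; intro j _
          ring
      _ = ∑ i, ∑ j, p i * q i j * (L i - L j) := by rw [hswap]; ring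
  have hzero : ∑ i, ∑ j, (p i * q i j - μ i * q i j * r j) = 0 := by
    have h1 : ∑ i, ∑ j, p i * q i j = 0 := by
      apply Finset.sum_eq_zero; intro i _
      rw [← Finset.mul_sum, hqrow i, mul_zero]
    have h2 : ∑ i, ∑ j, μ i * q i j * r j = 0 := by
      rw [Finset.sum_comm]
      apply Finset.sum_eq_zero; intro j _
      have : ∑ i, μ i * q i j * r j = (∑ i, μ i * q i j) * r j := by
        rw [Finset.sum_mul]
      rw [this, hstat j, zero_mul]
    have h3 : ∑ i, ∑ j, (p i * q i j - μ i * q i j * r j)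
        = (∑ i, ∑ j, p i * q i j) - ∑ i, ∑ j, μ i * q i j * r j := by
      rw [← Finset.sum_sub_distrib]
      apply Finset.sum_congr rfl; intro i _
      rw [← Finset.sum_sub_distrib]
    rw [h3, h1, h2, sub_zero]
  set h : Fin N → Fin N → ℝ :=
    fun i j => p i * q i j * (L i - L j) - (p i * q i j - μ i * q i j * r j) with hhdef
  have hE2 : E = ∑ i, ∑ j, h i j := by
    have hh : ∑ i, ∑ j, h i j = (∑ i, ∑ j, p i * q i j * (L i - L j))
        - ∑ i, ∑ j, (p i * q i j - μ i * q i j * r j) := by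
      rw [← Finset.sum_sub_distrib]
      apply Finset.sum_congr rfl; intro i _
      rw [← Finset.sum_sub_distrib]
    rw [hE1, hh, hzero, sub_zero]
  have hmr : ∀ i, μ i * r i = p i := fun i => by rw [hpr i]; ring
  -- key inequality per term
  have hkey : ∀ i j, p i - μ i * r j ≤ p i * (L i - L j) := by
    intro i j
    have hlog2 : Real.log (r j / r i) ≤ r j / r i - 1 :=
      Real.log_le_sub_one_of_pos (div_pos (hrpos j) (hrpos i))
    rw [Real.log_div (ne_of_gt (hrpos j)) (ne_of_gt (hrpos i))] at hlog2
    have h3 : p i * (Real.log (r j) - Real.log (r i)) ≤ p i * (r j / r i - 1) :=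
      mul_le_mul_of_nonneg_left hlog2 (hppos i).le
    have hid : p i * (r j / r i) = μ i * r j := by
      calc p i * (r j / r i) = (r i * μ i) * (r j / r i) := by rw [← hpr i]
        _ = μ i * r j * (r i / r i) := by ring
        _ = μ i * r j := by rw [div_self (ne_of_gt (hrpos i)), mul_one]
    have hL : L i - L j = -(Real.log (r j) - Real.log (r i)) := by
      simp only [hLdef]; ring
    rw [hL]
    nlinarith [h3, hid]
  have hform : ∀ i j, h i j = q i j * (p i * (L i - L j) - (p i - μ i * r j)) := by
    intro i j; simp only [hhdef]; ring
  have hnn : ∀ i j, 0 ≤ h i j := by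
    intro i j
    by_cases hij : i = j
    · subst hij
      have : h i i = 0 := by
        simp only [hhdef]
        have : μ i * q i i * r i = p i * q i i := by rw [← hmr i]; ring
        rw [this]; ring
      rw [this]
    · rw [hform i j]
      exact mul_nonneg (hq i j hij) (by linarith [hkey i j])
  have hzero_terms : E = 0 → ∀ i j, h i j = 0 := by
    intro hE0 i j
    have houter : ∀ i ∈ univ, (0:ℝ) ≤ ∑ j, h i j :=
      fun i _ => Finset.sum_nonneg fun j _ => hnn i j
    have h1 : ∑ j, h i j = 0 :=
      (Finset.sum_eq_zero_iff_of_nonneg houter).mp (by rw [← hE2]; exact hE0) i (mem_univ i)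
    exact (Finset.sum_eq_zero_iff_of_nonneg (fun j _ => hnn i j)).mp h1 j (mem_univ j)
  -- edge equality from E = 0
  have hedge : E = 0 → ∀ i j, 0 < q i j → r i = r j := by
    intro hE0 i j hqij
    have h0 := hzero_terms hE0 i j
    rw [hform i j] at h0
    have hfac : p i * (L i - L j) - (p i - μ i * r j) = 0 :=
      (mul_eq_zero.mp h0).resolve_left (ne_of_gt hqij)
    have hx : r j / r i = 1 := by
      by_contra hx
      have hlt := Real.log_lt_sub_one_of_pos (div_pos (hrpos j) (hrpos i)) hx
      rw [Real.log_div (ne_of_gt (hrpos j)) (ne_of_gt (hrpos i))] at hlt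
      have h5 : p i * (Real.log (r j) - Real.log (r i)) < p i * (r j / r i - 1) :=
        mul_lt_mul_of_pos_left hlt (hppos i)
      have hid : p i * (r j / r i) = μ i * r j := by
        calc p i * (r j / r i) = (r i * μ i) * (r j / r i) := by rw [← hpr i]
          _ = μ i * r j * (r i / r i) := by ring
          _ = μ i * r j := by rw [div_self (ne_of_gt (hrpos i)), mul_one]
      have hL : L i - L j = -(Real.log (r j) - Real.log (r i)) := by
        simp only [hLdef]; ring
      rw [hL] at hfac
      nlinarith [h5, hid, hfac]
    have := (div_eq_one_iff_eq (ne_of_gt (hrpos i))).mp hx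
    exact this.symm
  -- constant ratio implies p = μ
  have hconst_imp : (∀ i j, r i = r j) → p = μ := by
    intro hc
    set i₀ : Fin N := ⟨0, hNpos⟩
    have hsum : (1:ℝ) = r i₀ := by
      calc (1:ℝ) = ∑ i, p i := hp1.symm
        _ = ∑ i, r i₀ * μ i := by
            apply Finset.sum_congr rfl; intro i _; rw [hpr i, hc i i₀]
        _ = r i₀ * ∑ i, μ i := by rw [Finset.mul_sum]
        _ = r i₀ := by rw [hμ1, mul_one]
    funext i
    rw [hpr i, hc i i₀, ← hsum, one_mul]
  -- chain propagation forward
  have hchain_fwd : (∀ i j, 0 < q i j → r i = r j) → ∀ i j, r i = r j := by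
    intro hstep i j
    by_cases hij : i = j
    · rw [hij]
    obtain ⟨m, c, hc0, hcl, hce⟩ := hirr i j hij
    have key : ∀ n : ℕ, ∀ hn : n < m + 1, r (c ⟨n, hn⟩) = r (c 0) := by
      intro n
      induction n with
      | zero =>
        intro hn
        have e : (⟨0, hn⟩ : Fin (m+1)) = 0 := by ext; simp
        rw [e]
      | succ n ih =>
        intro hn
        have hn' : n < m + 1 := by omega
        have hm : n < m := by omega
        have hed := hce ⟨n, hm⟩
        have e1 : (⟨n, hm⟩ : Fin m).castSucc = (⟨n, hn'⟩ : Fin (m+1)) := by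
          ext; simp
        have e2 : (⟨n, hm⟩ : Fin m).succ = (⟨n+1, hn⟩ : Fin (m+1)) := by
          ext; simp
        rw [e1, e2] at hed
        rw [← hstep _ _ hed]
        exact ih hn'
    have h1 := key m (by omega)
    have e3 : (⟨m, by omega⟩ : Fin (m+1)) = Fin.last m := by ext; simp [Fin.last]
    rw [e3, hcl, hc0] at h1
    exact h1.symm
  have hE_imp_eq : E = 0 → p = μ := by
    intro h0
    exact hconst_imp (hchain_fwd (fun i j hij => hedge h0 i j hij))
  have heq_imp_E : p = μ → E = 0 := by
    intro hpe
    rw [hEdef, hpe]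
    have hterm : ∀ i j : Fin N,
        (μ i * q i j - μ j * q j i) * Real.log ((μ i * μ j) / (μ j * μ i)) = 0 := by
      intro i j
      have h1 : (μ i * μ j) / (μ j * μ i) = 1 := by
        rw [mul_comm (μ j) (μ i)]
        exact div_self (mul_pos (hμpos i) (hμpos j)).ne'
      rw [h1, Real.log_one, mul_zero]
    have : ∑ i, ∑ j, (μ i * q i j - μ j * q j i) * Real.log ((μ i * μ j) / (μ j * μ i)) = 0 := by
      apply Finset.sum_eq_zero; intro i _
      apply Finset.sum_eq_zero; intro j _
      exact hterm i j
    rw [this, mul_zero]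
  have heq_imp_stat : p = μ → ∀ i, ∑ j ∈ univ.erase i, (p j * q j i - p i * q i j) = 0 := by
    intro hpe i
    rw [hpe]
    rw [Finset.sum_sub_distrib]
    have h1 : ∑ j ∈ univ.erase i, μ j * q j i = - (μ i * q i i) := by
      rw [Finset.sum_erase_eq_sub (mem_univ i), hstat i]
      ring
    have h2 : ∑ j ∈ univ.erase i, μ i * q i j = - (μ i * q i i) := by
      rw [← Finset.mul_sum, Finset.sum_erase_eq_sub (mem_univ i), hqrow i]
      ring
    rw [h1, h2]; ring
  have hstat_imp_eq : (∀ i, ∑ j ∈ univ.erase i, (p j * q j i - p i * q i j) = 0) → p = μ := by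
    intro hs
    have hps : ∀ i, ∑ j, p j * q j i = 0 := by
      intro i
      have h0 := hs i
      rw [Finset.sum_sub_distrib] at h0
      have h2 : ∑ j ∈ univ.erase i, p i * q i j = - (p i * q i i) := by
        rw [← Finset.mul_sum, Finset.sum_erase_eq_sub (mem_univ i), hqrow i]
        ring
      have h3 : ∑ j ∈ univ.erase i, p j * q j i = (∑ j, p j * q j i) - p i * q i i :=
        Finset.sum_erase_eq_sub (mem_univ i)
      rw [h2, h3] at h0
      linarith
    obtain ⟨i₀, -, hmax⟩ := Finset.exists_max_image univ r ⟨⟨0, hNpos⟩, mem_univ _⟩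
    have hstep : ∀ i, r i = r i₀ → ∀ j, 0 < q j i → r j = r i := by
      intro i hi j hj
      have hsum0 : ∑ k, (r i * μ k - p k) * q k i = 0 := by
        have he : ∑ k, (r i * μ k - p k) * q k i
            = r i * (∑ k, μ k * q k i) - ∑ k, p k * q k i := by
          rw [Finset.mul_sum, ← Finset.sum_sub_distrib]
          apply Finset.sum_congr rfl; intro k _; ring
        rw [he, hstat i, hps i]; ring
      have hterm_nonneg : ∀ k ∈ univ, (0:ℝ) ≤ (r i * μ k - p k) * q k i := by
        intro k _
        by_cases hk : k = i
        · subst hk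
          have hz : r k * μ k - p k = 0 := by rw [hpr k]; ring
          rw [hz, zero_mul]
        · apply mul_nonneg _ (hq k i hk)
          have hle : r k ≤ r i := by rw [hi]; exact hmax k (mem_univ k)
          have hμk := hμpos k
          rw [hpr k]
          nlinarith
      have ht := (Finset.sum_eq_zero_iff_of_nonneg hterm_nonneg).mp hsum0 j (mem_univ j)
      have hfac : r i * μ j - p j = 0 :=
        (mul_eq_zero.mp ht).resolve_right (ne_of_gt hj)
      have h7 : r i * μ j = r j * μ j := by rw [← hpr j]; linarith
      exact (mul_right_cancel₀ (ne_of_gt (hμpos j)) h7).symm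
    have hall : ∀ j, r j = r i₀ := by
      intro j
      by_cases hj : j = i₀
      · rw [hj]
      obtain ⟨m, c, hc0, hcl, hce⟩ := hirr j i₀ hj
      have key : ∀ n : ℕ, n ≤ m →
          r (c ⟨m - n, Nat.lt_succ_of_le (Nat.sub_le m n)⟩) = r i₀ := by
        intro n
        induction n with
        | zero =>
          intro _
          have e : (⟨m - 0, Nat.lt_succ_of_le (Nat.sub_le m 0)⟩ : Fin (m+1)) = Fin.last m := by
            ext; simp [Fin.last]
          rw [e, hcl]
        | succ n ih =>
          intro hn
          have hn' : n ≤ m := by omega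
          have ihn := ih hn'
          have hm : m - (n+1) < m := by omega
          have hed := hce ⟨m - (n+1), hm⟩
          have e1 : (⟨m - (n+1), hm⟩ : Fin m).castSucc
              = (⟨m - (n+1), Nat.lt_succ_of_le (Nat.sub_le m (n+1))⟩ : Fin (m+1)) := by
            ext; simp
          have e2 : (⟨m - (n+1), hm⟩ : Fin m).succ
              = (⟨m - n, Nat.lt_succ_of_le (Nat.sub_le m n)⟩ : Fin (m+1)) := by
            ext
            simp [Fin.succ]
            omega
          rw [e1, e2] at hed
          have hstep' := hstep _ ihn _ hed
          rw [← ihn]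
          exact hstep'
      have h1 := key m le_rfl
      have e : (⟨m - m, Nat.lt_succ_of_le (Nat.sub_le m m)⟩ : Fin (m+1)) = 0 := by
        ext; simp
      rw [e, hc0] at h1
      exact h1
    exact hconst_imp (fun i j => (hall i).trans (hall j).symm)
  refine ⟨⟨fun h0 => heq_imp_stat (hE_imp_eq h0), fun hs => heq_imp_E (hstat_imp_eq hs)⟩,
    hE_imp_eq, heq_imp_E⟩
end

section
/- Let α < 2, α ≠ 0, α ≠ 1, and β ≥ 0. Then for every x ∈ (−1, β] (and in the limit also x = −1), the inequality (1/(α(α−1)))·[(x+1)^α − α·x − 1] ≥ (1/2)·(β+1)^(α−2)·x² holds. -/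
/-!
Let `f t = ((t + 1) ^ α - α t - 1) / (α (α - 1))`. Then `f 0 = f' 0 = 0` and
`f'' t = (t + 1) ^ (α - 2)`, which on `(-1, β]` is at least `m = (β + 1) ^ (α - 2)` because the
exponent is negative. Hence `f t - m t² / 2` is convex there and lies above its tangent at `0`,
which is the zero line.
-/

open Set

theorem ConvexOn.apply_add_mul_sub_le_of_hasDerivAt {S : Set ℝ} {g : ℝ → ℝ} {a x g' : ℝ}
    (hg : ConvexOn ℝ S g) (ha : a ∈ S) (hx : x ∈ S) (hd : HasDerivAt g g' a) :
    g a + g' * (x - a) ≤ g x := by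
  rcases lt_trichotomy a x with hax | rfl | hxa
  · have h := hg.le_slope_of_hasDerivAt ha hx hax hd
    rw [slope_def_field, le_div_iff₀ (sub_pos.2 hax)] at h
    linarith
  · simp
  · have h := hg.slope_le_of_hasDerivAt hx ha hxa hd
    rw [slope_def_field, div_le_iff₀ (sub_pos.2 hxa)] at h
    linarith

theorem add_mul_sub_add_mul_sq_le_of_hasDerivAt {S : Set ℝ} (hS : Convex ℝ S)
    {f f' f'' : ℝ → ℝ} {m a x : ℝ} (hf : ∀ t ∈ S, HasDerivAt f (f' t) t)
    (hf' : ∀ t ∈ S, HasDerivAt f' (f'' t) t) (hm : ∀ t ∈ S, m ≤ f'' t) (ha : a ∈ S)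
    (hx : x ∈ S) :
    f a + f' a * (x - a) + m * (x - a) ^ 2 / 2 ≤ f x := by
  set g : ℝ → ℝ := fun t => f t - m * (t - a) ^ 2 / 2
  have hg : ∀ t ∈ S, HasDerivAt g (f' t - m * (t - a)) t := fun t ht =>
    ((hf t ht).fun_sub ((((hasDerivAt_id' t).sub_const a).pow 2).const_mul m |>.div_const 2))
      |>.congr_deriv (by ring)
  have hg' : ∀ t ∈ S, HasDerivAt (fun t => f' t - m * (t - a)) (f'' t - m) t := fun t ht =>
    ((hf' t ht).fun_sub (((hasDerivAt_id' t).sub_const a).const_mul m)).congr_deriv (by ring)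
  have hconv : ConvexOn ℝ S g :=
    convexOn_of_hasDerivWithinAt2_nonneg hS
      (fun t ht => (hg t ht).continuousAt.continuousWithinAt)
      (fun t ht => (hg t (interior_subset ht)).hasDerivWithinAt)
      (fun t ht => (hg' t (interior_subset ht)).hasDerivWithinAt)
      (fun t ht => sub_nonneg.2 (hm t (interior_subset ht)))
  have h := hconv.apply_add_mul_sub_le_of_hasDerivAt ha hx (hg a ha)
  simp only [g, sub_self, mul_zero, sub_zero] at h
  linarith

theorem hasDerivAt_add_one_rpow (p : ℝ) {t : ℝ} (ht : -1 < t) :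
    HasDerivAt (fun t => (t + 1) ^ p) (p * (t + 1) ^ (p - 1)) t := by
  simpa using ((hasDerivAt_id' t).add_const 1).rpow_const (p := p) (Or.inl (by linarith))

theorem power_mean_inequality (α β x : ℝ) (hα2 : α < 2) (hα0 : α ≠ 0) (hα1 : α ≠ 1)
    (hβ : 0 ≤ β) (hx1 : -1 < x) (hxβ : x ≤ β) :
    (1 / (α * (α - 1))) * ((x + 1) ^ α - α * x - 1) ≥
      (1 / 2) * (β + 1) ^ (α - 2) * x ^ 2 := by
  have hf : ∀ t ∈ Ioc (-1) β, HasDerivAt (fun t => 1 / (α * (α - 1)) * ((t + 1) ^ α - α * t - 1))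
      (((t + 1) ^ (α - 1) - 1) / (α - 1)) t := fun t ht =>
    ((((hasDerivAt_add_one_rpow α ht.1).fun_sub ((hasDerivAt_id' t).const_mul α)).sub_const 1)
      |>.const_mul _).congr_deriv (by field_simp)
  have hf' : ∀ t ∈ Ioc (-1) β, HasDerivAt (fun t => ((t + 1) ^ (α - 1) - 1) / (α - 1))
      ((t + 1) ^ (α - 2)) t := fun t ht =>
    ((hasDerivAt_add_one_rpow (α - 1) ht.1).sub_const 1 |>.div_const _).congr_deriv (by
      rw [show α - 1 - 1 = α - 2 by ring]; field_simp)
  have hm : ∀ t ∈ Ioc (-1) β, (β + 1) ^ (α - 2) ≤ (t + 1) ^ (α - 2) := fun t ht =>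
    Real.rpow_le_rpow_of_nonpos (by linarith [ht.1]) (by linarith [ht.2]) (by linarith)
  have h := add_mul_sub_add_mul_sq_le_of_hasDerivAt (convex_Ioc (-1) β) hf hf' hm
    ⟨by norm_num, hβ⟩ ⟨hx1, hxβ⟩
  simp only [zero_add, Real.one_rpow, mul_zero, sub_zero, sub_self, zero_div,
    zero_mul] at h
  linarith
end

section
/- For every real α ≥ 2 there exists a constant u_α > 0 such that for all real z ≥ −1, (1/(α(α−1)))·[(z+1)^α − 1 − α·z] ≥ u_α·|z|^α. -/
/-!
With `u = 1 / (α (α - 1))` the claim is `1 + α z + |z| ^ α ≤ (1 + z) ^ α`. Both sides agree at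
`z = 0`, and the derivative of their difference is `α` times
`(z + 1) ^ (α - 1) - 1 - z ^ (α - 1)` for `z ≥ 0`, resp. `(z + 1) ^ (α - 1) + (-z) ^ (α - 1) - 1`
for `-1 ≤ z ≤ 0`. Superadditivity of `t ↦ t ^ (α - 1)` on `[0, ∞)` (as `α - 1 ≥ 1`) makes the
first nonnegative and the second nonpositive.
-/

open Set

namespace Real

variable {α : ℝ}

theorem hasDerivAt_rpow_add_one_sub_mul_sub_rpow (hα : 1 ≤ α) (x : ℝ) :
    HasDerivAt (fun x => (x + 1) ^ α - α * x - x ^ α)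
      (α * (x + 1) ^ (α - 1) - α - α * x ^ (α - 1)) x := by
  have h₁ := ((hasDerivAt_id' x).add_const 1).rpow_const (p := α) (Or.inr hα)
  have h₂ := (hasDerivAt_id' x).rpow_const (p := α) (Or.inr hα)
  exact ((h₁.fun_sub ((hasDerivAt_id' x).const_mul α)).fun_sub h₂).congr_deriv (by ring)

theorem hasDerivAt_rpow_add_one_sub_mul_sub_rpow_neg (hα : 1 ≤ α) (x : ℝ) :
    HasDerivAt (fun x => (x + 1) ^ α - α * x - (-x) ^ α)
      (α * (x + 1) ^ (α - 1) - α + α * (-x) ^ (α - 1)) x := by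
  have h₁ := ((hasDerivAt_id' x).add_const 1).rpow_const (p := α) (Or.inr hα)
  have h₂ := (hasDerivAt_neg x).rpow_const (p := α) (Or.inr hα)
  exact ((h₁.fun_sub ((hasDerivAt_id' x).const_mul α)).fun_sub h₂).congr_deriv (by ring)

theorem monotoneOn_rpow_add_one_sub_mul_sub_rpow (hα : 2 ≤ α) :
    MonotoneOn (fun x => (x + 1) ^ α - α * x - x ^ α) (Ici 0) := by
  have hderiv := hasDerivAt_rpow_add_one_sub_mul_sub_rpow (α := α) (by linarith)
  refine monotoneOn_of_hasDerivWithinAt_nonneg (convex_Ici 0)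
    (fun x _ => (hderiv x).continuousAt.continuousWithinAt)
    (fun x _ => (hderiv x).hasDerivWithinAt) fun x hx => ?_
  rw [interior_Ici, mem_Ioi] at hx
  have hsuper := add_rpow_le_rpow_add hx.le zero_le_one (by linarith : 1 ≤ α - 1)
  rw [one_rpow] at hsuper
  nlinarith

theorem antitoneOn_rpow_add_one_sub_mul_sub_rpow_neg (hα : 2 ≤ α) :
    AntitoneOn (fun x => (x + 1) ^ α - α * x - (-x) ^ α) (Icc (-1) 0) := by
  have hderiv := hasDerivAt_rpow_add_one_sub_mul_sub_rpow_neg (α := α) (by linarith)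
  refine antitoneOn_of_hasDerivWithinAt_nonpos (convex_Icc (-1) 0)
    (fun x _ => (hderiv x).continuousAt.continuousWithinAt)
    (fun x _ => (hderiv x).hasDerivWithinAt) fun x hx => ?_
  rw [interior_Icc, mem_Ioo] at hx
  have hsuper := add_rpow_le_rpow_add (by linarith : 0 ≤ x + 1) (by linarith : 0 ≤ -x)
    (by linarith : 1 ≤ α - 1)
  rw [← sub_eq_add_neg, add_sub_cancel_left, one_rpow] at hsuper
  nlinarith

theorem one_add_mul_add_abs_rpow_le_rpow_one_add {z : ℝ} (hz : -1 ≤ z) (hα : 2 ≤ α) :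
    1 + α * z + |z| ^ α ≤ (1 + z) ^ α := by
  have hα₀ : α ≠ 0 := by positivity
  rw [add_comm 1 z]
  rcases le_total 0 z with hz₀ | hz₀
  · have h := monotoneOn_rpow_add_one_sub_mul_sub_rpow hα self_mem_Ici hz₀ hz₀
    simp only [zero_add, one_rpow, mul_zero, sub_zero, zero_rpow hα₀] at h
    rw [abs_of_nonneg hz₀]
    linarith
  · have h := antitoneOn_rpow_add_one_sub_mul_sub_rpow_neg hα ⟨hz, hz₀⟩
      (right_mem_Icc.2 (by norm_num)) hz₀
    simp only [zero_add, one_rpow, mul_zero, sub_zero, neg_zero, zero_rpow hα₀] at h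
    rw [abs_of_nonpos hz₀]
    linarith

end Real

theorem leindler_type_inequality (α : ℝ) (hα : 2 ≤ α) :
    ∃ u : ℝ, 0 < u ∧ ∀ z : ℝ, -1 ≤ z →
      (1 / (α * (α - 1))) * ((z + 1) ^ α - 1 - α * z) ≥ u * |z| ^ α := by
  have hu : 0 < 1 / (α * (α - 1)) := one_div_pos.2 (by nlinarith)
  refine ⟨1 / (α * (α - 1)), hu, fun z hz => ?_⟩
  have h := Real.one_add_mul_add_abs_rpow_le_rpow_one_add hz hα
  rw [add_comm 1 z] at h
  exact mul_le_mul_of_nonneg_left (by linarith) hu.le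
end

section
/- Let p and μ be probability distributions on N states with all μ_i > 0, and let α ≥ 2. Then the Tsallis-type relative entropy F_α = (1/(α(α−1)))·[Σ_i p_i·(p_i/μ_i)^(α−1) − 1] satisfies F_α ≥ u_α·Σ_i μ_i^(1−α)·|p_i − μ_i|^α, where u_α > 0 is the constant from the inequality (1/(α(α−1)))·[(z+1)^α − 1 − αz] ≥ u_α·|z|^α valid for all z ≥ −1. -/
theorem tsallis_entropy_lower_bound_ge_two (N : ℕ) (p μ : Fin N → ℝ) (α u : ℝ)
    (hα : 2 ≤ α) (hu : 0 < u)
    (huIneq : ∀ z : ℝ, -1 ≤ z →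
      (1 / (α * (α - 1))) * ((z + 1) ^ α - 1 - α * z) ≥ u * |z| ^ α)
    (hp : ∀ i, 0 ≤ p i) (hμ : ∀ i, 0 < μ i)
    (hp1 : ∑ i, p i = 1) (hμ1 : ∑ i, μ i = 1) :
    (1 / (α * (α - 1))) * ((∑ i, p i * (p i / μ i) ^ (α - 1)) - 1) ≥
      u * ∑ i, μ i ^ (1 - α) * |p i - μ i| ^ α := by
  have hα1 : (1:ℝ) < α := by linarith
  set c := 1 / (α * (α - 1)) with hcdef
  -- pointwise rewrite of the left-hand summand
  have hL : ∀ i, p i * (p i / μ i) ^ (α - 1) = μ i * (p i / μ i) ^ α := by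
    intro i
    have hμi := hμ i
    have hdiv : 0 ≤ p i / μ i := div_nonneg (hp i) hμi.le
    rcases eq_or_lt_of_le hdiv with h0 | h0
    · have hpz : p i = 0 := by
        rcases div_eq_zero_iff.mp h0.symm with h | h
        · exact h
        · exact absurd h hμi.ne'
      rw [hpz]
      simp [Real.zero_rpow (by linarith : α ≠ 0)]
    · have h := Real.rpow_add h0 1 (α - 1)
      rw [Real.rpow_one, show (1:ℝ) + (α - 1) = α by ring] at h
      rw [h]
      field_simp
  -- pointwise rewrite of the right-hand summand
  have hR : ∀ i, μ i ^ (1 - α) * |p i - μ i| ^ α = μ i * |p i / μ i - 1| ^ α := by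
    intro i
    have hμi := hμ i
    have h1 : p i - μ i = μ i * (p i / μ i - 1) := by field_simp
    rw [h1, abs_mul, abs_of_pos hμi, Real.mul_rpow hμi.le (abs_nonneg _),
      ← mul_assoc, ← Real.rpow_add hμi]
    norm_num
  have hsum0 : ∑ i, μ i * (p i / μ i - 1) = 0 := by
    have h : ∀ i ∈ Finset.univ, μ i * (p i / μ i - 1) = p i - μ i := by
      intro i _
      have := (hμ i).ne'
      field_simp
    rw [Finset.sum_congr rfl h, Finset.sum_sub_distrib, hp1, hμ1]
    ring
  have expand : ∑ i, μ i * (c * ((p i / μ i - 1 + 1) ^ α - 1 - α * (p i / μ i - 1)))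
      = c * ((∑ i, p i * (p i / μ i) ^ (α - 1)) - 1) := by
    have h : ∀ i ∈ Finset.univ, μ i * (c * ((p i / μ i - 1 + 1) ^ α - 1 - α * (p i / μ i - 1)))
        = c * (μ i * (p i / μ i) ^ α) - c * μ i - (c * α) * (μ i * (p i / μ i - 1)) := by
      intro i _
      have : p i / μ i - 1 + 1 = p i / μ i := by ring
      rw [this]; ring
    rw [Finset.sum_congr rfl h, Finset.sum_sub_distrib, Finset.sum_sub_distrib,
      ← Finset.mul_sum, ← Finset.mul_sum, ← Finset.mul_sum, hμ1, hsum0]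
    have h2 : ∑ i, μ i * (p i / μ i) ^ α = ∑ i, p i * (p i / μ i) ^ (α - 1) := by
      exact Finset.sum_congr rfl fun i _ => (hL i).symm
    rw [h2]; ring
  have hRsum : u * ∑ i, μ i ^ (1 - α) * |p i - μ i| ^ α
      = ∑ i, μ i * (u * |p i / μ i - 1| ^ α) := by
    rw [Finset.mul_sum]
    refine Finset.sum_congr rfl fun i _ => ?_
    rw [hR i]; ring
  rw [hRsum, ← expand]
  apply Finset.sum_le_sum
  intro i _
  have hx : (-1:ℝ) ≤ p i / μ i - 1 := by
    have : 0 ≤ p i / μ i := div_nonneg (hp i) (hμ i).le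
    linarith
  exact mul_le_mul_of_nonneg_left (huIneq _ hx) (hμ i).le
end

section
/- Let Q be an irreducible rate matrix on N states with stationary distribution μ (all μ_i > 0), r = min_i μ_i, M = max_{i≠j} q_ij. Let α < 2, α ≠ 0, 1, and let p(t) solve the master equation dp_i/dt = Σ_j p_j q_ji with all p_i(t) > 0. Then the dissipation rate of the Tsallis free energy F_α(t) = (1/(α(α−1)))·[Σ_i p_i(t)·(p_i(t)/μ_i)^(α−1) − 1] satisfies −dF_α/dt ≥ (r^(4−2α)/(2MN))·Σ_i [Σ_{j≠i}(p_j q_ji − p_i q_ij)]². -/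
open Finset Set

/-!
Write `y = p / μ` and `F u = u ^ α / (α (α - 1))`. Row sums and stationarity turn `-dF_α/dt`
into `∑_{i ≠ j} μ_j q_ji B(y_j, y_i)`, where `B` is the Bregman divergence of `F`. As `α < 2`,
`F'' u = u ^ (α - 2) ≥ r ^ (2 - α)` on `(0, 1/r]`, which contains every `y_i` because `p_i ≤ 1`;
hence `B(y_j, y_i) ≥ r ^ (2 - α) (y_j - y_i)² / 2`. On the other side the net flux into `i` is
`∑_{j ≠ i} μ_j q_ji (y_j - y_i)`, and Cauchy–Schwarz with `∑_{j ≠ i} μ_j q_ji ≤ M` bounds its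
square by `M ∑_{j ≠ i} μ_j q_ji (y_j - y_i)²`. This gives the constant `r ^ (2 - α) / (2M)`,
which dominates `r ^ (4 - 2α) / (2MN)` since `r ≤ 1 ≤ N`.
-/

theorem ConvexOn.add_mul_sub_le_of_hasDerivAt {S : Set ℝ} {f : ℝ → ℝ} {f' x y : ℝ}
    (hf : ConvexOn ℝ S f) (hx : x ∈ S) (hy : y ∈ S) (hf' : HasDerivAt f f' x) :
    f x + f' * (y - x) ≤ f y := by
  rcases lt_trichotomy x y with hxy | rfl | hxy
  · have := hf.le_slope_of_hasDerivAt hx hy hxy hf'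
    rw [slope_def_field, le_div_iff₀ (sub_pos.2 hxy)] at this
    linarith
  · simp
  · have := hf.slope_le_of_hasDerivAt hy hx hxy hf'
    rw [slope_def_field, div_le_iff₀ (sub_pos.2 hxy)] at this
    linarith

section Tsallis

variable {α : ℝ}

theorem hasDerivAt_rpow_div_mul_sub_one (hα0 : α ≠ 0) (hα1 : α ≠ 1) {u : ℝ} (hu : 0 < u) :
    HasDerivAt (fun v => v ^ α / (α * (α - 1))) (u ^ (α - 1) / (α - 1)) u :=
  ((Real.hasDerivAt_rpow_const (Or.inl hu.ne')).div_const (α * (α - 1))).congr_deriv <| by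
    field_simp

theorem hasDerivAt_rpow_sub_one_div (hα1 : α ≠ 1) {u : ℝ} (hu : 0 < u) :
    HasDerivAt (fun v => v ^ (α - 1) / (α - 1)) (u ^ (α - 2)) u :=
  ((Real.hasDerivAt_rpow_const (Or.inl hu.ne')).div_const (α - 1)).congr_deriv <| by
    rw [sub_sub, one_add_one_eq_two, mul_div_cancel_left₀ _ (sub_ne_zero.2 hα1)]

theorem convexOn_rpow_div_sub_sq (hα2 : α < 2) (hα0 : α ≠ 0) (hα1 : α ≠ 1) (c : ℝ) :
    ConvexOn ℝ (Ioc 0 c) (fun u => u ^ α / (α * (α - 1)) - c ^ (α - 2) * u ^ 2 / 2) := by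
  have hf' : ∀ u : ℝ, 0 < u →
      HasDerivAt (fun v => v ^ α / (α * (α - 1)) - c ^ (α - 2) * v ^ 2 / 2)
        (u ^ (α - 1) / (α - 1) - c ^ (α - 2) * u) u := fun u hu =>
    ((hasDerivAt_rpow_div_mul_sub_one hα0 hα1 hu).sub
      (((hasDerivAt_pow 2 u).const_mul (c ^ (α - 2))).div_const 2)).congr_deriv (by ring)
  have hf'' : ∀ u : ℝ, 0 < u → HasDerivAt (fun v => v ^ (α - 1) / (α - 1) - c ^ (α - 2) * v)
      (u ^ (α - 2) - c ^ (α - 2)) u := fun u hu =>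
    ((hasDerivAt_rpow_sub_one_div hα1 hu).sub
      ((hasDerivAt_id u).const_mul (c ^ (α - 2)))).congr_deriv (by simp)
  refine convexOn_of_hasDerivWithinAt2_nonneg (convex_Ioc 0 c)
    (fun u hu => (hf' u hu.1).continuousAt.continuousWithinAt)
    (fun u hu => (hf' u (interior_subset hu).1).hasDerivWithinAt)
    (fun u hu => (hf'' u (interior_subset hu).1).hasDerivWithinAt) fun u hu => ?_
  rw [interior_Ioc] at hu
  exact sub_nonneg.2 (Real.rpow_le_rpow_of_nonpos hu.1 hu.2.le (by linarith))

/-- The Bregman divergence of the Tsallis potential `u ↦ u ^ α / (α (α - 1))`. -/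
noncomputable def tsallisBregman (α a b : ℝ) : ℝ :=
  a ^ α / (α * (α - 1)) - b ^ α / (α * (α - 1)) - b ^ (α - 1) / (α - 1) * (a - b)

theorem mul_sq_le_tsallisBregman (hα2 : α < 2) (hα0 : α ≠ 0) (hα1 : α ≠ 1) {a b c : ℝ}
    (ha : 0 < a) (hb : 0 < b) (hac : a ≤ c) (hbc : b ≤ c) :
    c ^ (α - 2) / 2 * (a - b) ^ 2 ≤ tsallisBregman α a b := by
  have htangent := (convexOn_rpow_div_sub_sq hα2 hα0 hα1 c).add_mul_sub_le_of_hasDerivAt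
    ⟨hb, hbc⟩ ⟨ha, hac⟩ ((hasDerivAt_rpow_div_mul_sub_one hα0 hα1 hb).sub
      (((hasDerivAt_pow 2 b).const_mul (c ^ (α - 2))).div_const 2))
  rw [tsallisBregman]
  linear_combination htangent

theorem mul_sum_sum_sq_le_sum_sum_tsallisBregman {ι : Type*} [Fintype ι] [DecidableEq ι]
    {c : ℝ} {w : ι → ι → ℝ} {y : ι → ℝ} (hα2 : α < 2) (hα0 : α ≠ 0) (hα1 : α ≠ 1)
    (hw : ∀ i, ∀ j ∈ univ.erase i, 0 ≤ w j i) (hy : ∀ i, 0 < y i) (hyc : ∀ i, y i ≤ c) :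
    c ^ (α - 2) / 2 * ∑ i, ∑ j ∈ univ.erase i, w j i * (y j - y i) ^ 2
      ≤ ∑ i, ∑ j ∈ univ.erase i, w j i * tsallisBregman α (y j) (y i) := by
  simp only [mul_sum, mul_left_comm (c ^ (α - 2) / 2)]
  exact sum_le_sum fun i _ => sum_le_sum fun j hj => mul_le_mul_of_nonneg_left
    (mul_sq_le_tsallisBregman hα2 hα0 hα1 (hy j) (hy i) (hyc j) (hyc i)) (hw i j hj)

end Tsallis

theorem sq_sum_mul_le_mul_sum_mul_sq {ι : Type*} {s : Finset ι} {w v : ι → ℝ} {M : ℝ}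
    (hw : ∀ j ∈ s, 0 ≤ w j) (hM : ∑ j ∈ s, w j ≤ M) :
    (∑ j ∈ s, w j * v j) ^ 2 ≤ M * ∑ j ∈ s, w j * v j ^ 2 :=
  (sum_sq_le_sum_mul_sum_of_sq_le_mul s hw (fun j hj => mul_nonneg (hw j hj) (sq_nonneg _))
      fun j _ => (by ring : _ = _).le).trans <|
    mul_le_mul_of_nonneg_right hM <| sum_nonneg fun j hj => mul_nonneg (hw j hj) (sq_nonneg _)

section Generator

variable {ι : Type*} [Fintype ι] {q : ι → ι → ℝ} {μ : ι → ℝ}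

theorem sum_mul_generator_eq_sum_erase [DecidableEq ι] (hqrow : ∀ i, ∑ j, q i j = 0)
    (p : ι → ℝ) (i : ι) :
    ∑ j, p j * q j i = ∑ j ∈ univ.erase i, (p j * q j i - p i * q i j) := by
  rw [sum_sub_distrib, ← mul_sum, sum_erase_eq_sub (mem_univ i),
    sum_erase_eq_sub (mem_univ i), hqrow]
  ring

theorem sum_stationary_mul_generator_eq_sum_mul_sub (hstat : ∀ j, ∑ i, μ i * q i j = 0)
    (y : ι → ℝ) (i : ι) :
    ∑ j, μ j * y j * q j i = ∑ j, μ j * q j i * (y j - y i) := by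
  simp only [mul_sub, sum_sub_distrib, ← sum_mul, hstat, zero_mul, sub_zero]
  exact sum_congr rfl fun j _ => by ring

theorem sum_sum_stationary_mul_generator_sub_eq_zero (hqrow : ∀ i, ∑ j, q i j = 0)
    (hstat : ∀ j, ∑ i, μ i * q i j = 0) (F : ι → ℝ) :
    ∑ i, ∑ j, μ j * q j i * (F j - F i) = 0 := by
  simp only [mul_sub, sum_sub_distrib, ← sum_mul, hstat, zero_mul, sub_zero]
  rw [sum_comm]
  simp [mul_right_comm _ _ (F _), ← mul_sum, hqrow]

theorem sum_erase_flux_eq_sum_stationary_mul_sub [DecidableEq ι] (hqrow : ∀ i, ∑ j, q i j = 0)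
    (hstat : ∀ j, ∑ i, μ i * q i j = 0) (hμ : ∀ i, μ i ≠ 0) (p : ι → ℝ) (i : ι) :
    ∑ j ∈ univ.erase i, (p j * q j i - p i * q i j)
      = ∑ j ∈ univ.erase i, μ j * q j i * (p j / μ j - p i / μ i) := by
  rw [← sum_mul_generator_eq_sum_erase hqrow, sum_erase _ (by ring),
    ← sum_stationary_mul_generator_eq_sum_mul_sub hstat]
  exact sum_congr rfl fun j _ => by rw [mul_div_cancel₀ _ (hμ j)]

theorem sum_erase_stationary_mul_generator_le [DecidableEq ι] {M : ℝ} (hμ : ∀ i, 0 ≤ μ i)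
    (hμ1 : ∑ i, μ i = 1) (hM : ∀ i j, i ≠ j → q i j ≤ M) (hM0 : 0 ≤ M) (i : ι) :
    ∑ j ∈ univ.erase i, μ j * q j i ≤ M := calc
  _ ≤ ∑ j ∈ univ.erase i, μ j * M :=
    sum_le_sum fun j hj => mul_le_mul_of_nonneg_left (hM j i (ne_of_mem_erase hj)) (hμ j)
  _ ≤ ∑ j, μ j * M :=
    sum_le_sum_of_subset_of_nonneg (erase_subset _ _) fun j _ _ => mul_nonneg (hμ j) hM0
  _ = M := by rw [← sum_mul, hμ1, one_mul]

theorem sq_sum_erase_flux_le [DecidableEq ι] {M : ℝ} (hq : ∀ i j, i ≠ j → 0 ≤ q i j)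
    (hqrow : ∀ i, ∑ j, q i j = 0) (hstat : ∀ j, ∑ i, μ i * q i j = 0) (hμ : ∀ i, 0 < μ i)
    (hμ1 : ∑ i, μ i = 1) (hM : ∀ i j, i ≠ j → q i j ≤ M) (hM0 : 0 ≤ M) (p : ι → ℝ) (i : ι) :
    (∑ j ∈ univ.erase i, (p j * q j i - p i * q i j)) ^ 2
      ≤ M * ∑ j ∈ univ.erase i, μ j * q j i * (p j / μ j - p i / μ i) ^ 2 := by
  rw [sum_erase_flux_eq_sum_stationary_mul_sub hqrow hstat fun i => (hμ i).ne']
  exact sq_sum_mul_le_mul_sum_mul_sq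
    (fun j hj => mul_nonneg (hμ j).le (hq j i (ne_of_mem_erase hj)))
    (sum_erase_stationary_mul_generator_le (fun i => (hμ i).le) hμ1 hM hM0 i)

/-- The terms `F j - F i` sum to zero, so when `F' i` is the derivative of a potential at `y i`
and `F i` its value there, what remains are Bregman divergences. -/
theorem sum_drift_mul_eq_neg_sum_bregman [DecidableEq ι] (hqrow : ∀ i, ∑ j, q i j = 0)
    (hstat : ∀ j, ∑ i, μ i * q i j = 0) (y F F' : ι → ℝ) :
    ∑ i, (∑ j, μ j * y j * q j i) * F' i =
      -∑ i, ∑ j ∈ univ.erase i, μ j * q j i * (F j - F i - F' i * (y j - y i)) := calc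
  _ = ∑ i, ∑ j, μ j * q j i * (F j - F i)
        - ∑ i, ∑ j, μ j * q j i * (F j - F i - F' i * (y j - y i)) := by
    simp only [sum_stationary_mul_generator_eq_sum_mul_sub hstat, sum_mul, ← sum_sub_distrib]
    exact sum_congr rfl fun i _ => sum_congr rfl fun j _ => by ring
  _ = _ := by
    rw [sum_sum_stationary_mul_generator_sub_eq_zero hqrow hstat, zero_sub]
    congr 1
    exact sum_congr rfl fun i _ => by rw [sum_erase_eq_sub (mem_univ i)]; simp

end Generator

theorem hasDerivAt_tsallis {ι : Type*} [Fintype ι] {p : ℝ → ι → ℝ} {p' μ : ι → ℝ} {α t : ℝ}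
    (hα0 : α ≠ 0) (hα1 : α ≠ 1) (hμ : ∀ i, 0 < μ i) (hp : ∀ i, 0 < p t i)
    (hderiv : ∀ i, HasDerivAt (fun s => p s i) (p' i) t) :
    HasDerivAt (fun s => 1 / (α * (α - 1)) * ((∑ i, p s i * (p s i / μ i) ^ (α - 1)) - 1))
      (∑ i, p' i * ((p t i / μ i) ^ (α - 1) / (α - 1))) t := by
  have hterm (i : ι) : HasDerivAt (fun s => p s i * (p s i / μ i) ^ (α - 1))
      (α * (p' i * (p t i / μ i) ^ (α - 1))) t := by
    have hy : 0 < p t i / μ i := div_pos (hp i) (hμ i)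
    refine ((hderiv i).mul
      (((hderiv i).div_const (μ i)).rpow_const (Or.inl hy.ne'))).congr_deriv ?_
    have hpow : p t i / μ i * (p t i / μ i) ^ (α - 1 - 1) = (p t i / μ i) ^ (α - 1) := by
      rw [mul_comm, ← Real.rpow_add_one hy.ne', sub_add_cancel]
    linear_combination (α - 1) * p' i * hpow
  refine (((HasDerivAt.fun_sum fun i _ => hterm i).sub_const 1).const_mul _).congr_deriv ?_
  rw [mul_sum]
  exact sum_congr rfl fun i _ => by field_simp

theorem neg_eq_sum_tsallisBregman_of_hasDerivAt {ι : Type*} [Fintype ι] [DecidableEq ι]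
    {q : ι → ι → ℝ} {μ : ι → ℝ} {p : ℝ → ι → ℝ} {α t D : ℝ}
    (hqrow : ∀ i, ∑ j, q i j = 0) (hstat : ∀ j, ∑ i, μ i * q i j = 0)
    (hα0 : α ≠ 0) (hα1 : α ≠ 1) (hμ : ∀ i, 0 < μ i) (hp : ∀ i, 0 < p t i)
    (hderiv : ∀ i, HasDerivAt (fun s => p s i) (∑ j, p t j * q j i) t)
    (hD : HasDerivAt (fun s =>
      1 / (α * (α - 1)) * ((∑ i, p s i * (p s i / μ i) ^ (α - 1)) - 1)) D t) :
    -D = ∑ i, ∑ j ∈ univ.erase i,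
      μ j * q j i * tsallisBregman α (p t j / μ j) (p t i / μ i) := by
  have hdrift (i : ι) : ∑ j, p t j * q j i = ∑ j, μ j * (p t j / μ j) * q j i :=
    sum_congr rfl fun j _ => by rw [mul_div_cancel₀ _ (hμ j).ne']
  rw [hD.unique (hasDerivAt_tsallis hα0 hα1 hμ hp hderiv)]
  simp only [hdrift]
  rw [sum_drift_mul_eq_neg_sum_bregman hqrow hstat _ _ fun i => (p t i / μ i) ^ (α - 1) / (α - 1),
    neg_neg]
  rfl

theorem tsallis_dissipation_lower_bound_lt_two_general (N : ℕ) (q : Fin N → Fin N → ℝ)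
    (μ : Fin N → ℝ) (r M α : ℝ) (p : ℝ → Fin N → ℝ)
    (hq : ∀ i j, i ≠ j → 0 ≤ q i j)
    (hqrow : ∀ i, ∑ j, q i j = 0)
    (hμpos : ∀ i, 0 < μ i) (hμ1 : ∑ i, μ i = 1)
    (hstat : ∀ j, ∑ i, μ i * q i j = 0)
    (hr : 0 < r) (hrmin : ∀ i, r ≤ μ i)
    (hM : ∀ i j, i ≠ j → q i j ≤ M) (hMpos : 0 < M)
    (hα2 : α < 2) (hα0 : α ≠ 0) (hα1 : α ≠ 1)
    (hderiv : ∀ i t, HasDerivAt (fun s => p s i) (∑ j, p t j * q j i) t)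
    (hppos : ∀ t i, 0 < p t i) (hpsum : ∀ t, ∑ i, p t i = 1) :
    ∀ t D, HasDerivAt (fun s =>
        (1 / (α * (α - 1))) * ((∑ i, p s i * (p s i / μ i) ^ (α - 1)) - 1)) D t →
      -D ≥ (r ^ (4 - 2 * α) / (2 * M * N)) *
        ∑ i, (∑ j ∈ Finset.univ.erase i, (p t j * q j i - p t i * q i j)) ^ 2 := by
  intro t D hD
  have hN : 0 < N := Nat.pos_of_ne_zero fun hN => by subst hN; simp at hμ1
  have hr1 : r ≤ 1 :=
    (hrmin ⟨0, hN⟩).trans <| hμ1 ▸ single_le_sum (fun i _ => (hμpos i).le) (mem_univ _)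
  have hcoef : r ^ (4 - 2 * α) / (2 * M * N) ≤ r ^ (2 - α) / (2 * M) := by
    have hN1 : (1 : ℝ) ≤ N := by exact_mod_cast hN
    exact div_le_div₀ (by positivity) (Real.rpow_le_rpow_of_exponent_ge hr hr1 (by linarith))
      (by positivity) (by nlinarith)
  have hy_le (i : Fin N) : p t i / μ i ≤ r⁻¹ := by
    have hp1 : p t i ≤ 1 := hpsum t ▸ single_le_sum (fun j _ => (hppos t j).le) (mem_univ i)
    simpa using div_le_div₀ zero_le_one hp1 hr (hrmin i)
  rw [ge_iff_le, neg_eq_sum_tsallisBregman_of_hasDerivAt hqrow hstat hα0 hα1 hμpos (hppos t)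
    (fun i => hderiv i t) hD]
  calc _ ≤ r ^ (2 - α) / (2 * M) *
        ∑ i, (∑ j ∈ univ.erase i, (p t j * q j i - p t i * q i j)) ^ 2 :=
        mul_le_mul_of_nonneg_right hcoef (sum_nonneg fun i _ => sq_nonneg _)
    _ ≤ r ^ (2 - α) / (2 * M) * ∑ i, M *
        ∑ j ∈ univ.erase i, μ j * q j i * (p t j / μ j - p t i / μ i) ^ 2 := by
        gcongr with i
        exact sq_sum_erase_flux_le hq hqrow hstat hμpos hμ1 hM hMpos.le (p t) i
    _ = r⁻¹ ^ (α - 2) / 2 *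
        ∑ i, ∑ j ∈ univ.erase i, μ j * q j i * (p t j / μ j - p t i / μ i) ^ 2 := by
        rw [Real.inv_rpow hr.le, ← Real.rpow_neg hr.le, neg_sub, ← mul_sum]
        field_simp
    _ ≤ _ := mul_sum_sum_sq_le_sum_sum_tsallisBregman hα2 hα0 hα1
        (fun i j hj => mul_nonneg (hμpos j).le (hq j i (ne_of_mem_erase hj)))
        (fun i => div_pos (hppos t i) (hμpos i)) hy_le

theorem tsallis_dissipation_lower_bound_lt_two (N : ℕ) (q : Fin N → Fin N → ℝ)
    (μ : Fin N → ℝ) (r M α : ℝ) (p : ℝ → Fin N → ℝ)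
    (hq : ∀ i j, i ≠ j → 0 ≤ q i j)
    (hqrow : ∀ i, ∑ j, q i j = 0)
    (hirr : ∀ i j : Fin N, i ≠ j → ∃ (m : ℕ) (c : Fin (m + 1) → Fin N),
      c 0 = i ∧ c (Fin.last m) = j ∧ ∀ k : Fin m, 0 < q (c k.castSucc) (c k.succ))
    (hμpos : ∀ i, 0 < μ i) (hμ1 : ∑ i, μ i = 1)
    (hstat : ∀ j, ∑ i, μ i * q i j = 0)
    (hr : 0 < r) (hrmin : ∀ i, r ≤ μ i)
    (hM : ∀ i j, i ≠ j → q i j ≤ M) (hMpos : 0 < M)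
    (hα2 : α < 2) (hα0 : α ≠ 0) (hα1 : α ≠ 1)
    (hderiv : ∀ i t, HasDerivAt (fun s => p s i) (∑ j, p t j * q j i) t)
    (hppos : ∀ t i, 0 < p t i) (hpsum : ∀ t, ∑ i, p t i = 1) :
    ∀ t D, HasDerivAt (fun s =>
        (1 / (α * (α - 1))) * ((∑ i, p s i * (p s i / μ i) ^ (α - 1)) - 1)) D t →
      -D ≥ (r ^ (4 - 2 * α) / (2 * M * N)) *
        ∑ i, (∑ j ∈ Finset.univ.erase i, (p t j * q j i - p t i * q i j)) ^ 2 :=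
  tsallis_dissipation_lower_bound_lt_two_general N q μ r M α p hq hqrow hμpos hμ1 hstat hr hrmin hM
    hMpos hα2 hα0 hα1 hderiv hppos hpsum
end

section
/- Let Q be a rate matrix with stationary distribution μ (all μ_i > 0) and let p be a probability distribution with all p_i > 0. Then the total entropy production rate decomposes as e_p = e_p^{(ad)} + e_p^{(na)}, where e_p = (1/2)Σ_{i,j}(p_i q_ij − p_j q_ji) log((p_i q_ij)/(p_j q_ji)), e_p^{(ad)} = (1/2)Σ_{i,j}(p_i q_ij − p_j q_ji) log((μ_i q_ij)/(μ_j q_ji)), and e_p^{(na)} = (1/2)Σ_{i,j}(p_i q_ij − p_j q_ji) log((p_i μ_j)/(p_j μ_i)), and both e_p^{(ad)} ≥ 0 and e_p^{(na)} ≥ 0. -/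
open Finset

private lemma log_self_div (x : ℝ) : Real.log (x / x) = 0 := by
  rcases eq_or_ne x 0 with h | h
  · simp [h]
  · simp [div_self h]

private lemma sum_off_diag (N : ℕ) (i : Fin N) (g : Fin N → ℝ) :
    ∑ j, (if i = j then (0:ℝ) else g j) = (∑ j, g j) - g i := by
  have h : ∀ j, (if i = j then (0:ℝ) else g j)
      = g j - (if i = j then g j else 0) := by
    intro j; by_cases h : i = j <;> simp [h]
  simp_rw [h]
  rw [Finset.sum_sub_distrib, Finset.sum_ite_eq]
  simp

private lemma sum_off_diag' (N : ℕ) (j : Fin N) (g : Fin N → ℝ) :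
    ∑ i, (if i = j then (0:ℝ) else g i) = (∑ i, g i) - g j := by
  have h : ∀ i, (if i = j then (0:ℝ) else g i)
      = g i - (if i = j then g i else 0) := by
    intro i; by_cases h : i = j <;> simp [h]
  simp_rw [h]
  rw [Finset.sum_sub_distrib, Finset.sum_ite_eq']
  simp

private lemma aux_nonneg (N : ℕ) (q : Fin N → Fin N → ℝ) (p : Fin N → ℝ)
    (f : Fin N → Fin N → ℝ)
    (hq : ∀ i j, i ≠ j → 0 ≤ q i j)
    (hp : ∀ i, 0 ≤ p i)
    (hfpos : ∀ i j, i ≠ j → 0 < q i j → 0 < f i j ∧ 0 < f j i)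
    (hsum : ∑ i, ∑ j,
        (if i = j then (0:ℝ) else p i * q i j * (1 - f j i / f i j)) = 0) :
    0 ≤ ∑ i, ∑ j, (p i * q i j - p j * q j i) * Real.log (f i j / f j i) := by
  have hpoint : ∀ i j, p i * q i j * Real.log (f j i / f i j)
      = -(p i * q i j * Real.log (f i j / f j i)) := by
    intro i j
    rcases eq_or_ne i j with rfl | hij
    · rw [log_self_div]; ring
    · rcases eq_or_lt_of_le (hq i j hij) with h0 | hpos
      · rw [← h0]; ring
      · obtain ⟨h1, h2⟩ := hfpos i j hij hpos
        rw [Real.log_div h2.ne' h1.ne', Real.log_div h1.ne' h2.ne']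
        ring
  have hS : (∑ i, ∑ j, (p i * q i j - p j * q j i) * Real.log (f i j / f j i))
      = 2 * ∑ i, ∑ j, p i * q i j * Real.log (f i j / f j i) := by
    have hsplit : (∑ i, ∑ j, (p i * q i j - p j * q j i) * Real.log (f i j / f j i))
        = (∑ i, ∑ j, p i * q i j * Real.log (f i j / f j i))
          - (∑ i, ∑ j, p j * q j i * Real.log (f i j / f j i)) := by
      rw [← Finset.sum_sub_distrib]
      refine Finset.sum_congr rfl fun i _ => ?_
      rw [← Finset.sum_sub_distrib]
      refine Finset.sum_congr rfl fun j _ => ?_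
      ring
    have hswap : (∑ i, ∑ j, p j * q j i * Real.log (f i j / f j i))
        = - ∑ i, ∑ j, p i * q i j * Real.log (f i j / f j i) := by
      rw [Finset.sum_comm]
      simp_rw [hpoint, Finset.sum_neg_distrib]
    rw [hsplit, hswap]; ring
  have hT : (∑ i, ∑ j,
      (if i = j then (0:ℝ) else p i * q i j * (1 - f j i / f i j)))
      ≤ ∑ i, ∑ j, p i * q i j * Real.log (f i j / f j i) := by
    refine Finset.sum_le_sum fun i _ => Finset.sum_le_sum fun j _ => ?_
    rcases eq_or_ne i j with rfl | hij
    · simp [log_self_div]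
    · rw [if_neg hij]
      rcases eq_or_lt_of_le (hq i j hij) with h0 | hpos
      · rw [← h0]; simp
      · obtain ⟨h1, h2⟩ := hfpos i j hij hpos
        have hlog : Real.log (f j i / f i j) ≤ f j i / f i j - 1 :=
          Real.log_le_sub_one_of_pos (div_pos h2 h1)
        have hneg : Real.log (f j i / f i j) = -Real.log (f i j / f j i) := by
          rw [Real.log_div h2.ne' h1.ne', Real.log_div h1.ne' h2.ne']; ring
        have h3 : 1 - f j i / f i j ≤ Real.log (f i j / f j i) := by
          rw [hneg] at hlog; linarith
        have h4 : 0 ≤ p i * q i j := mul_nonneg (hp i) hpos.le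
        nlinarith
  rw [hS]
  nlinarith [hsum, hT]

theorem ep_decomposition (N : ℕ) (q : Fin N → Fin N → ℝ)
    (μ p : Fin N → ℝ)
    (hq : ∀ i j, i ≠ j → 0 ≤ q i j)
    (hqrow : ∀ i, ∑ j, q i j = 0)
    (hqsym : ∀ i j, i ≠ j → (0 < q i j ↔ 0 < q j i))
    (hμpos : ∀ i, 0 < μ i) (hμ1 : ∑ i, μ i = 1)
    (hstat : ∀ j, ∑ i, μ i * q i j = 0)
    (hppos : ∀ i, 0 < p i) (hp1 : ∑ i, p i = 1) :
    ((1 / 2) * ∑ i, ∑ j, (p i * q i j - p j * q j i) *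
          Real.log ((p i * q i j) / (p j * q j i)) =
        (1 / 2) * (∑ i, ∑ j, (p i * q i j - p j * q j i) *
            Real.log ((μ i * q i j) / (μ j * q j i))) +
          (1 / 2) * ∑ i, ∑ j, (p i * q i j - p j * q j i) *
            Real.log ((p i * μ j) / (p j * μ i))) ∧
      (0 ≤ (1 / 2) * ∑ i, ∑ j, (p i * q i j - p j * q j i) *
          Real.log ((μ i * q i j) / (μ j * q j i))) ∧
      (0 ≤ (1 / 2) * ∑ i, ∑ j, (p i * q i j - p j * q j i) *
          Real.log ((p i * μ j) / (p j * μ i))) := by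
  have hq0 : ∀ i j, i ≠ j → q i j = 0 → q j i = 0 := by
    intro i j hij h
    by_contra hne
    have hji : 0 < q j i := lt_of_le_of_ne (hq j i hij.symm) (Ne.symm hne)
    have : 0 < q i j := (hqsym i j hij).mpr hji
    exact absurd h this.ne'
  -- the termwise decomposition
  have key : ∀ i j, (p i * q i j - p j * q j i) *
        Real.log ((p i * q i j) / (p j * q j i))
      = (p i * q i j - p j * q j i) * Real.log ((μ i * q i j) / (μ j * q j i))
        + (p i * q i j - p j * q j i) * Real.log ((p i * μ j) / (p j * μ i)) := by
    intro i j
    rcases eq_or_ne i j with rfl | hij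
    · simp
    · rcases eq_or_lt_of_le (hq i j hij) with h0 | hpos
      · have h0' : q j i = 0 := hq0 i j hij h0.symm
        rw [← h0, h0']; simp
      · have hji : 0 < q j i := (hqsym i j hij).mp hpos
        have e1 : Real.log ((p i * q i j) / (p j * q j i))
            = Real.log (p i) + Real.log (q i j)
              - (Real.log (p j) + Real.log (q j i)) := by
          rw [Real.log_div (mul_pos (hppos i) hpos).ne' (mul_pos (hppos j) hji).ne',
            Real.log_mul (hppos i).ne' hpos.ne',
            Real.log_mul (hppos j).ne' hji.ne']
        have e2 : Real.log ((μ i * q i j) / (μ j * q j i))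
            = Real.log (μ i) + Real.log (q i j)
              - (Real.log (μ j) + Real.log (q j i)) := by
          rw [Real.log_div (mul_pos (hμpos i) hpos).ne' (mul_pos (hμpos j) hji).ne',
            Real.log_mul (hμpos i).ne' hpos.ne',
            Real.log_mul (hμpos j).ne' hji.ne']
        have e3 : Real.log ((p i * μ j) / (p j * μ i))
            = Real.log (p i) + Real.log (μ j)
              - (Real.log (p j) + Real.log (μ i)) := by
          rw [Real.log_div (mul_pos (hppos i) (hμpos j)).ne' (mul_pos (hppos j) (hμpos i)).ne',
            Real.log_mul (hppos i).ne' (hμpos j).ne',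
            Real.log_mul (hppos j).ne' (hμpos i).ne']
        rw [e1, e2, e3]; ring
  refine ⟨?_, ?_, ?_⟩
  · have h : (∑ i, ∑ j, (p i * q i j - p j * q j i) *
          Real.log ((p i * q i j) / (p j * q j i)))
        = (∑ i, ∑ j, (p i * q i j - p j * q j i) *
            Real.log ((μ i * q i j) / (μ j * q j i)))
          + ∑ i, ∑ j, (p i * q i j - p j * q j i) *
            Real.log ((p i * μ j) / (p j * μ i)) := by
      rw [← Finset.sum_add_distrib]
      refine Finset.sum_congr rfl fun i _ => ?_
      rw [← Finset.sum_add_distrib]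
      exact Finset.sum_congr rfl fun j _ => key i j
    rw [h]; ring
  · -- adiabatic part
    have hnn := aux_nonneg N q p (fun i j => μ i * q i j) hq
      (fun i => (hppos i).le)
      (fun i j hij hpos => ⟨mul_pos (hμpos i) hpos,
        mul_pos (hμpos j) ((hqsym i j hij).mp hpos)⟩)
      ?_
    · have : (0:ℝ) ≤ ∑ i, ∑ j, (p i * q i j - p j * q j i) *
          Real.log ((μ i * q i j) / (μ j * q j i)) := hnn
      linarith
    · have hpt : ∀ i j, (if i = j then (0:ℝ)
          else p i * q i j * (1 - (μ j * q j i) / (μ i * q i j)))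
          = (if i = j then (0:ℝ) else p i * q i j)
            - (if i = j then (0:ℝ) else (p i / μ i) * (μ j * q j i)) := by
        intro i j
        rcases eq_or_ne i j with rfl | hij
        · simp
        · simp only [if_neg hij]
          rcases eq_or_lt_of_le (hq i j hij) with h0 | hpos
          · have h0' : q j i = 0 := hq0 i j hij h0.symm
            rw [← h0, h0']; ring
          · have hμi := (hμpos i).ne'
            field_simp
      simp_rw [hpt, Finset.sum_sub_distrib]
      have hA : (∑ i, ∑ j, (if i = j then (0:ℝ) else p i * q i j))
          = ∑ i, -(p i * q i i) := by
        refine Finset.sum_congr rfl fun i _ => ?_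
        rw [sum_off_diag N i (fun j => p i * q i j), ← Finset.mul_sum,
          hqrow i, mul_zero, zero_sub]
      have hB : (∑ i, ∑ j, (if i = j then (0:ℝ) else (p i / μ i) * (μ j * q j i)))
          = ∑ i, -(p i * q i i) := by
        refine Finset.sum_congr rfl fun i _ => ?_
        rw [sum_off_diag N i (fun j => (p i / μ i) * (μ j * q j i)),
          ← Finset.mul_sum]
        have : (∑ j, μ j * q j i) = 0 := hstat i
        rw [this, mul_zero, zero_sub]
        have hμi := (hμpos i).ne'
        field_simp
      rw [hA, hB, sub_self]
  · -- non-adiabatic part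
    have hnn := aux_nonneg N q p (fun i j => p i * μ j) hq
      (fun i => (hppos i).le)
      (fun i j hij _ => ⟨mul_pos (hppos i) (hμpos j), mul_pos (hppos j) (hμpos i)⟩)
      ?_
    · have : (0:ℝ) ≤ ∑ i, ∑ j, (p i * q i j - p j * q j i) *
          Real.log ((p i * μ j) / (p j * μ i)) := hnn
      linarith
    · have hpt : ∀ i j, (if i = j then (0:ℝ)
          else p i * q i j * (1 - (p j * μ i) / (p i * μ j)))
          = (if i = j then (0:ℝ) else p i * q i j)
            - (if i = j then (0:ℝ) else (p j / μ j) * (μ i * q i j)) := by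
        intro i j
        rcases eq_or_ne i j with rfl | hij
        · simp
        · simp only [if_neg hij]
          have hμj := (hμpos j).ne'
          have hpi := (hppos i).ne'
          field_simp
      simp_rw [hpt, Finset.sum_sub_distrib]
      have hA : (∑ i, ∑ j, (if i = j then (0:ℝ) else p i * q i j))
          = ∑ i, -(p i * q i i) := by
        refine Finset.sum_congr rfl fun i _ => ?_
        rw [sum_off_diag N i (fun j => p i * q i j), ← Finset.mul_sum,
          hqrow i, mul_zero, zero_sub]
      have hB : (∑ i, ∑ j, (if i = j then (0:ℝ) else (p j / μ j) * (μ i * q i j)))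
          = ∑ j, -(p j * q j j) := by
        rw [Finset.sum_comm]
        refine Finset.sum_congr rfl fun j _ => ?_
        rw [sum_off_diag' N j (fun i => (p j / μ j) * (μ i * q i j)),
          ← Finset.mul_sum]
        rw [hstat j, mul_zero, zero_sub]
        have hμj := (hμpos j).ne'
        field_simp
      rw [hA, hB, sub_self]
end
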